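/- arXiv:1508.02965 — 4 statements merged into one kernel-verified Lean document; each statement's English description precedes it below -/
import Mathlib

section
/- Properties of the inner minimization algorithm. Let T > 0, α ∈ {0,1}, f ∈ W^{1,2}([0,T]; 𝓕), v₀ ∈ 𝓔 a critical point of v ↦ J(v) + αψ(v − v₀) on 𝐀(f(0)), and assume (J1)–(J3) hold, and (Ψ1)–(Ψ3) if α = 1. Let δ ∈ (0,1), let i ∈ ℕ with iδ ≤ T, set v^{−1} := v₀, and suppose v^{i−1} ∈ 𝓔 is a critical point of v ↦ J(v) + αψ(v − v^{i−2}) on 𝐀(f((i−1)δ)). Define v^i_0 := v^{i−1} and, for j ∈ ℕ, let v^i_j be the unique minimizer of v ↦ J(v) + η‖v − v^i_{j−1}‖² + αψ(v − v^i_0) over 𝐀(f(iδ)) (existence and uniqueness follow from (J1),(J2)). Then: (i) the sequence (J(v^i_j) + αψ(v^i_j − v^i_0))_{j ≥ 2} is nonincreasing and convergent; (ii) the sequence (v^i_j)_{j ≥ 0} is bounded and ‖v^i_j − v^i_{j−1}‖ → 0 as j → ∞; (iii) every cluster point v^i of (v^i_j)_{j ≥ 0} satisfies A v^i = f(iδ)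 and (∂J(v^i) + ∂(αψ)(v^i − v^{i−1})) ∩ ran(A*) ≠ ∅, i.e. v^i is a critical point of v ↦ J(v) + αψ(v − v^{i−1}) on 𝐀(f(iδ)). -/
open MeasureTheory Filter Set
open scoped RealInnerProductSpace Topology Pointwise ENNReal

noncomputable section

/-- The Fréchet subdifferential of `S : E → ℝ` at `u`. -/
def fsub {E : Type*} [NormedAddCommGroup E] [InnerProductSpace ℝ E]
    (S : E → ℝ) (u : E) : Set E :=
  {ξ | 0 ≤ Filter.liminf (fun v => (S v - S u - ⟪ξ, v - u⟫) / ‖v - u‖) (𝓝[≠] u)}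

/-- The convex subdifferential of `ψ : E → ℝ` at `v`. -/
def csub {E : Type*} [NormedAddCommGroup E] [InnerProductSpace ℝ E]
    (ψ : E → ℝ) (v : E) : Set E :=
  {ξ | ∀ w, ψ v + ⟪ξ, w - v⟫ ≤ ψ w}

/-- `u` is a critical point of `S` on the affine space `{v | A v = fv}`. -/
def IsCritPt {E F : Type*} [NormedAddCommGroup E] [InnerProductSpace ℝ E]
    [FiniteDimensional ℝ E] [NormedAddCommGroup F] [InnerProductSpace ℝ F]
    [FiniteDimensional ℝ F] (A : E →ₗ[ℝ] F) (S : E → ℝ) (fv : F) (u : E) : Prop :=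
  A u = fv ∧ (fsub S u ∩ Set.range (LinearMap.adjoint A)).Nonempty

/-- A discrete quasistatic evolution with time step `δ`, initial condition `v0`
and constraint `f` on the time interval `[-δ, T]`. -/
def IsDiscreteQE {E F : Type*} [NormedAddCommGroup E] [InnerProductSpace ℝ E]
    [FiniteDimensional ℝ E] [NormedAddCommGroup F] [InnerProductSpace ℝ F]
    [FiniteDimensional ℝ F] (J ψ : E → ℝ) (α : ℝ) (A : E →ₗ[ℝ] F) (T δ : ℝ)
    (f : ℝ → F) (v0 : E) (vδ : ℝ → E) : Prop :=
  (∀ t ∈ Set.Ico (-δ) δ ∩ Set.Icc (-δ) T, vδ t = v0) ∧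
  (∀ i : ℕ, (i : ℝ) * δ ≤ T →
    ∀ t ∈ Set.Icc (0 : ℝ) T ∩ Set.Ico ((i : ℝ) * δ) ((i : ℝ) * δ + δ),
      vδ t = vδ ((i : ℝ) * δ)) ∧
  (∀ i : ℕ, (i : ℝ) * δ ≤ T →
    IsCritPt A (fun v => J v + α * ψ (v - vδ ((i : ℝ) * δ - δ))) (f ((i : ℝ) * δ))
      (vδ ((i : ℝ) * δ)))

/-- An approximable quasistatic evolution with initial condition `v0` and constraint `f`. -/
def IsApproxQE {E F : Type*} [NormedAddCommGroup E] [InnerProductSpace ℝ E]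
    [FiniteDimensional ℝ E] [MeasurableSpace E] [BorelSpace E]
    [NormedAddCommGroup F] [InnerProductSpace ℝ F] [FiniteDimensional ℝ F]
    (J ψ : E → ℝ) (α : ℝ) (A : E →ₗ[ℝ] F) (T : ℝ) (f : ℝ → F)
    (v0 : E) (v : ℝ → E) : Prop :=
  Measurable v ∧ (∃ C : ℝ, ∀ t ∈ Set.Icc (0 : ℝ) T, ‖v t‖ ≤ C) ∧
  ∀ t ∈ Set.Icc (0 : ℝ) T, ∃ (δ : ℕ → ℝ) (vd : ℕ → ℝ → E),
    (∀ k, δ k ∈ Set.Ioo (0 : ℝ) 1) ∧ Tendsto δ atTop (𝓝 0) ∧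
    (∀ k, IsDiscreteQE J ψ α A T (δ k) f v0 (vd k)) ∧
    Filter.liminf (fun k => ‖vd k t - v t‖) atTop = 0

/-- `s` is the `ψ`-sum associated with some partition `a = t₀ < t₁ < ⋯ < t_k = b`. -/
def IsPartSum {E : Type*} [NormedAddCommGroup E] (ψ : E → ℝ) (u : ℝ → E)
    (a b : ℝ) (s : ℝ) : Prop :=
  ∃ (k : ℕ) (t : ℕ → ℝ), t 0 = a ∧ t k = b ∧ (∀ i < k, t i < t (i + 1)) ∧
    s = ∑ i ∈ Finset.range k, ψ (u (t (i + 1)) - u (t i))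

/-- The `ψ`-variation of `u` on `[a,b]`, as a real number (supremum of partition sums). -/
def psiVar {E : Type*} [NormedAddCommGroup E] (ψ : E → ℝ) (u : ℝ → E) (a b : ℝ) : ℝ :=
  sSup {s : ℝ | IsPartSum ψ u a b s}

/-- The `ψ`-variation of `u` on `[a,b]`, with values in `[0,∞]`. -/
def psiVarE {E : Type*} [NormedAddCommGroup E] (ψ : E → ℝ) (u : ℝ → E) (a b : ℝ) : ℝ≥0∞ :=
  sSup {s : ℝ≥0∞ | ∃ r : ℝ, IsPartSum ψ u a b r ∧ s = ENNReal.ofReal r}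

/-- The data of the incremental minimization algorithm: `vi i` is the approximate
solution at step `i` (a cluster point of the inner iterates `vseq i`), produced from
`vi (i-1)` by iteratively minimizing `v ↦ J v + η ‖v - wⱼ‖² + α ψ (v - vi (i-1))`. -/
def AlgData {E F : Type*} [NormedAddCommGroup E] [InnerProductSpace ℝ E]
    [FiniteDimensional ℝ E] [NormedAddCommGroup F] [InnerProductSpace ℝ F]
    [FiniteDimensional ℝ F] (J ψ : E → ℝ) (α : ℝ) (A : E →ₗ[ℝ] F) (η T δ : ℝ)
    (f : ℝ → F) (v0 : E) (vi : ℕ → E) (vseq : ℕ → ℕ → E) : Prop :=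
  vi 0 = v0 ∧
  ∀ i : ℕ, 1 ≤ i → (i : ℝ) * δ ≤ T →
    vseq i 0 = vi (i - 1) ∧
    (∀ j : ℕ, A (vseq i (j + 1)) = f ((i : ℝ) * δ) ∧
      ∀ u : E, A u = f ((i : ℝ) * δ) →
        J (vseq i (j + 1)) + η * ‖vseq i (j + 1) - vseq i j‖ ^ 2
            + α * ψ (vseq i (j + 1) - vseq i 0)
          ≤ J u + η * ‖u - vseq i j‖ ^ 2 + α * ψ (u - vseq i 0)) ∧
    MapClusterPt (vi i) atTop (vseq i)

/-- The piecewise constant evolution associated with the algorithm outputs `vi`. -/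
def AlgEvol {E : Type*} [NormedAddCommGroup E] (T δ : ℝ) (v0 : E) (vi : ℕ → E)
    (vδ : ℝ → E) : Prop :=
  (∀ t ∈ Set.Ico (-δ) (0 : ℝ), vδ t = v0) ∧
  (∀ i : ℕ, (i : ℝ) * δ ≤ T →
    ∀ t ∈ Set.Icc (-δ) T ∩ Set.Ico ((i : ℝ) * δ) ((i : ℝ) * δ + δ), vδ t = vi i)

/-!
Testing the minimality of `w (j + 1)` against `w j` shows that the energy
`G = J + αψ(· - w 0)` drops by at least `η ‖w (j + 1) - w j‖²` at every step `j ≥ 1`; this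
gives (i), the vanishing increments and, through (J1), boundedness. Passing to the limit along a
subsequence, a cluster point `z` minimizes `u ↦ G u + η ‖u - z‖²` on the constraint set.

The multiplier rule at `z` comes from the penalized problems
`min J x + αψ(y - w 0) + n (‖x - y‖² + ‖A (x - z)‖²) + κ (‖x - z‖² + ‖y - z‖²)`, which separate
`J` from `ψ` and from the constraint. Their first-order conditions give a proximal subgradient of
`J` at `x`, a convex subgradient of `αψ(· - w 0)` at `y` and, adding up, an element of `ran A*`;
all are bounded, by (J3) and because the sublinear `ψ` is Lipschitz. Along a subsequence the
minimizers tend to `z` and the subgradients converge, and (J2) makes the limit of the proximal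
subgradients a Fréchet subgradient.
-/

theorem liminf_nonneg_of_forall_eventually_ge {ι : Type*} {l : Filter ι} {q : ι → ℝ}
    (h : ∀ ε > 0, ∀ᶠ x in l, -ε ≤ q x) : 0 ≤ liminf q l := by
  by_cases hb : IsCoboundedUnder (· ≥ ·) l q
  · refine le_of_forall_pos_le_add fun ε hε => ?_
    linarith [le_liminf_of_le hb (h ε hε)]
  · have hb' : ¬ BddAbove {a | ∀ᶠ x in l, a ≤ q x} := hb
    rw [liminf_eq, csSup_of_not_bddAbove hb', Real.sSup_empty]

theorem isBounded_of_forall_mul_sq_norm_sub_le {X : Type*} [SeminormedAddCommGroup X]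
    {S : Set X} {κ M : ℝ} (hκ : 0 < κ) (q : X) (hS : ∀ x ∈ S, κ * ‖x - q‖ ^ 2 ≤ M) :
    Bornology.IsBounded S := by
  refine (Metric.isBounded_closedBall (x := q) (r := max 1 (M / κ))).subset fun x hx => ?_
  rw [Metric.mem_closedBall, dist_eq_norm]
  by_contra! h
  have h1 : 1 < ‖x - q‖ := (le_max_left _ _).trans_lt h
  have h2 : M < ‖x - q‖ * κ := (div_lt_iff₀ hκ).1 ((le_max_right _ _).trans_lt h)
  nlinarith [hS x hx, mul_pos (sub_pos.2 h1) (mul_pos hκ (zero_lt_one.trans h1))]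

theorem LowerSemicontinuous.exists_forall_le_of_isBounded {X : Type*} [PseudoMetricSpace X]
    [ProperSpace X] {h : X → ℝ} (hh : LowerSemicontinuous h) (x₀ : X)
    (hb : Bornology.IsBounded {x | h x ≤ h x₀}) : ∃ m, ∀ x, h m ≤ h x := by
  have hK : IsCompact {x | h x ≤ h x₀} :=
    Metric.isCompact_of_isClosed_isBounded (hh.isClosed_preimage (h x₀)) hb
  obtain ⟨m, hm₀, hm⟩ :=
    (hh.lowerSemicontinuousOn _).exists_isMinOn ⟨x₀, le_refl (h x₀)⟩ hK
  refine ⟨m, fun x => ?_⟩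
  by_cases hx : h x ≤ h x₀
  · exact hm hx
  · exact hm₀.trans (le_of_not_ge hx)

theorem LowerSemicontinuous.le_of_tendsto {X ι : Type*} [TopologicalSpace X] {h : X → ℝ}
    (hh : LowerSemicontinuous h) {l : Filter ι} [l.NeBot] {x : ι → X} {z : X} {c : ℝ}
    (hx : Tendsto x l (𝓝 z)) (hc : Tendsto (fun k => h (x k)) l (𝓝 c)) : h z ≤ c :=
  le_of_forall_lt_imp_le_of_dense fun y hy =>
    ge_of_tendsto hc (hx.eventually (hh z y hy) |>.mono fun _ => le_of_lt)

theorem eventually_norm_sub_mul_lt {X : Type*} [SeminormedAddCommGroup X] (v : X) (c : ℝ)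
    {ε : ℝ} (hε : 0 < ε) : ∀ᶠ u in 𝓝 v, ‖u - v‖ * (|c| + 1) < ε := by
  filter_upwards [Metric.ball_mem_nhds v (div_pos hε (by positivity : (0:ℝ) < |c| + 1))]
    with u hu
  rwa [mem_ball_iff_norm, lt_div_iff₀ (by positivity)] at hu

theorem LipschitzWith.comp_sub_const {X : Type*} [SeminormedAddCommGroup X] {φ : X → ℝ}
    {K : NNReal} (hφ : LipschitzWith K φ) (c : X) : LipschitzWith K fun u => φ (u - c) :=
  LipschitzWith.of_dist_le_mul fun x y =>
    (hφ.dist_le_mul _ _).trans_eq (by rw [dist_sub_right])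

theorem eq_of_mul_sq_norm_sub_nonpos {X : Type*} [NormedAddCommGroup X] {x y : X} {c : ℝ}
    (hc : 0 < c) (h : c * ‖x - y‖ ^ 2 ≤ 0) : x = y := by
  have : ‖x - y‖ ^ 2 = 0 := le_antisymm (nonpos_of_mul_nonpos_right h hc) (sq_nonneg _)
  rwa [pow_eq_zero_iff two_ne_zero, norm_sub_eq_zero_iff] at this

theorem tendsto_zero_of_mul_sq_norm_le {ι X : Type*} [SeminormedAddCommGroup X] {l : Filter ι}
    {a : ι → ℝ} {d : ι → X} {V : ℝ} (ha : Tendsto a l atTop)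
    (h : ∀ k, a k * ‖d k‖ ^ 2 ≤ V) : Tendsto d l (𝓝 0) := by
  have hsq : Tendsto (fun k => ‖d k‖ ^ 2) l (𝓝 0) := by
    refine squeeze_zero' (.of_forall fun k => sq_nonneg _) ?_
      ((tendsto_const_nhds (x := V)).div_atTop ha)
    filter_upwards [ha.eventually_gt_atTop 0] with k hk
    rw [le_div_iff₀ hk, mul_comm]
    exact h k
  rw [tendsto_zero_iff_norm_tendsto_zero]
  simpa [Real.sqrt_sq (norm_nonneg _)] using hsq.sqrt

section FrechetSubdifferential

variable {E : Type*} [NormedAddCommGroup E] [InnerProductSpace ℝ E]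

def IsProxSubgradient (J : E → ℝ) (v ξ : E) : Prop :=
  ∃ K : ℝ, ∀ u, J v + ⟪ξ, u - v⟫ - K * ‖u - v‖ ^ 2 ≤ J u

theorem IsProxSubgradient.mem_fsub {J : E → ℝ} {v ξ : E} (h : IsProxSubgradient J v ξ) :
    ξ ∈ fsub J v := by
  obtain ⟨K, hK⟩ := h
  refine liminf_nonneg_of_forall_eventually_ge fun ε hε => ?_
  filter_upwards [eventually_nhdsWithin_of_eventually_nhds (eventually_norm_sub_mul_lt v K hε),
    self_mem_nhdsWithin] with u hu hne
  have hpos : 0 < ‖u - v‖ := norm_pos_iff.2 (sub_ne_zero.2 hne)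
  rw [le_div_iff₀ hpos]
  nlinarith [hK u, le_abs_self K, mul_lt_mul_of_pos_right hu hpos]

theorem IsProxSubgradient.add_sq_norm {J : E → ℝ} {v ξ : E} (h : IsProxSubgradient J v ξ)
    (η : ℝ) : IsProxSubgradient (fun x => J x + η * ‖x‖ ^ 2) v (ξ + (2 * η) • v) := by
  obtain ⟨K, hK⟩ := h
  refine ⟨K - η, fun u => ?_⟩
  have hsplit : ‖u‖ ^ 2 = ‖v‖ ^ 2 + 2 * ⟪v, u - v⟫ + ‖u - v‖ ^ 2 := by
    rw [← norm_add_sq_real, add_sub_cancel]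
  rw [inner_add_left, real_inner_smul_left]
  linear_combination hK u - η * hsplit

theorem IsProxSubgradient.of_forall_le_add {J g : E → ℝ} {x G : E} {M : ℝ}
    (hmin : ∀ u, J x + g x ≤ J u + g u)
    (hg : ∀ u, g u ≤ g x + ⟪G, u - x⟫ + M * ‖u - x‖ ^ 2) : IsProxSubgradient J x (-G) :=
  ⟨M, fun u => by linarith [hmin u, hg u, inner_neg_left (𝕜 := ℝ) G (u - x)]⟩

theorem norm_sub_sq_eq_add_inner (x y u : E) :
    ‖u - y‖ ^ 2 = ‖x - y‖ ^ 2 + 2 * ⟪x - y, u - x⟫ + ‖u - x‖ ^ 2 := by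
  rw [← norm_add_sq_real, sub_add_sub_cancel']

/- Where the difference quotient of `J` at `v` is not eventually bounded below, the `liminf` in
`fsub` takes the junk value `sSup ∅ = 0`, so every vector is a subgradient. A bound on `fsub J`
as in (J3) therefore makes `J` calm from below, hence lower semicontinuous. -/
theorem fsub_eq_univ_of_not_calm {J : E → ℝ} {v : E}
    (h : ¬ ∃ a, ∀ᶠ u in 𝓝[≠] v, a ≤ (J u - J v) / ‖u - v‖) : fsub J v = univ := by
  refine eq_univ_of_forall fun ξ => ?_
  have hempty :
      {a : ℝ | ∀ᶠ u in 𝓝[≠] v, a ≤ (J u - J v - ⟪ξ, u - v⟫) / ‖u - v‖} = ∅ := by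
    refine eq_empty_of_forall_notMem fun a ha => h ⟨a - ‖ξ‖, ?_⟩
    filter_upwards [ha, self_mem_nhdsWithin] with u hu hne
    have hpos : 0 < ‖u - v‖ := norm_pos_iff.2 (sub_ne_zero.2 hne)
    rw [le_div_iff₀ hpos] at hu ⊢
    linarith [neg_le_of_abs_le (abs_real_inner_le_norm ξ (u - v)), sub_mul a ‖ξ‖ ‖u - v‖]
  rw [fsub, mem_ofPred_eq, liminf_eq, hempty, Real.sSup_empty]

theorem lowerSemicontinuous_of_forall_mem_fsub_norm_le {J : E → ℝ} (B : E → ℝ)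
    (hB : ∀ v ξ, ξ ∈ fsub J v → ‖ξ‖ ≤ B v) : LowerSemicontinuous J := by
  intro v c hc
  obtain ⟨a, ha⟩ : ∃ a, ∀ᶠ u in 𝓝[≠] v, a ≤ (J u - J v) / ‖u - v‖ := by
    by_contra h
    rcases subsingleton_or_nontrivial E with hE | hE
    · exact h ⟨0, eventually_nhdsWithin_of_forall fun u hu =>
        absurd (Subsingleton.elim u v) hu⟩
    · obtain ⟨ξ, hξ⟩ := exists_norm_eq E (le_max_right (B v + 1) 0)
      linarith [hB v ξ (fsub_eq_univ_of_not_calm h ▸ mem_univ ξ), le_max_left (B v + 1) 0]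
  rw [eventually_nhdsWithin_iff] at ha
  filter_upwards [ha, eventually_norm_sub_mul_lt v a (sub_pos.2 hc)] with u hcalm hu
  rcases eq_or_ne u v with rfl | hne
  · exact hc
  · have hpos : 0 < ‖u - v‖ := norm_pos_iff.2 (sub_ne_zero.2 hne)
    have := (le_div_iff₀ hpos).1 (hcalm hne)
    nlinarith [neg_abs_le a]

end FrechetSubdifferential

section ConvexSubdifferential

variable {E : Type*} [NormedAddCommGroup E] [InnerProductSpace ℝ E] {φ : E → ℝ}

theorem convexOn_univ_of_sublinear (hadd : ∀ x y, φ (x + y) ≤ φ x + φ y)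
    (hsmul : ∀ c : ℝ, 0 ≤ c → ∀ x, φ (c • x) = c * φ x) : ConvexOn ℝ univ φ :=
  ⟨convex_univ, fun x _ y _ a b ha hb _ => by
    simpa only [hsmul a ha, hsmul b hb, smul_eq_mul] using hadd (a • x) (b • y)⟩

theorem exists_le_mul_norm_of_sublinear [FiniteDimensional ℝ E]
    (hadd : ∀ x y, φ (x + y) ≤ φ x + φ y)
    (hsmul : ∀ c : ℝ, 0 ≤ c → ∀ x, φ (c • x) = c * φ x) :
    ∃ C, ∀ x, φ x ≤ C * ‖x‖ := by
  have hφ0 : φ 0 = 0 := by simpa using hsmul 0 le_rfl 0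
  have hcont : Continuous φ :=
    continuousOn_univ.1 ((convexOn_univ_of_sublinear hadd hsmul).continuousOn isOpen_univ)
  obtain ⟨r, hr, hball⟩ : ∃ r > 0, ∀ x, ‖x‖ < r → φ x < 1 := by
    simpa [hφ0, dist_eq_norm] using
      Metric.eventually_nhds_iff.1 ((hcont.tendsto 0).eventually
        (gt_mem_nhds (by rw [hφ0]; exact zero_lt_one : φ 0 < 1)))
  refine ⟨2 / r, fun x => ?_⟩
  rcases eq_or_ne x 0 with rfl | hx
  · simp [hφ0]
  set t := 2 * ‖x‖ / r
  have ht : 0 < t := by positivity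
  have hx' : φ (t⁻¹ • x) < 1 := hball _ (by
    have : t⁻¹ * ‖x‖ = r / 2 := by simp only [t]; field_simp
    rw [norm_smul, norm_inv, Real.norm_of_nonneg ht.le, this]
    linarith)
  calc φ x = t * φ (t⁻¹ • x) := by rw [← hsmul t ht.le, smul_inv_smul₀ ht.ne']
    _ ≤ t * 1 := by gcongr
    _ = 2 / r * ‖x‖ := by ring

theorem exists_lipschitzWith_of_sublinear [FiniteDimensional ℝ E]
    (hadd : ∀ x y, φ (x + y) ≤ φ x + φ y)
    (hsmul : ∀ c : ℝ, 0 ≤ c → ∀ x, φ (c • x) = c * φ x) :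
    ∃ K, LipschitzWith K φ := by
  obtain ⟨C, hC⟩ := exists_le_mul_norm_of_sublinear hadd hsmul
  refine ⟨C.toNNReal, LipschitzWith.of_le_add_mul _ fun x y => ?_⟩
  rw [dist_eq_norm]
  have := hadd y (x - y)
  rw [add_sub_cancel] at this
  nlinarith [hC (x - y), mul_le_mul_of_nonneg_right (Real.le_coe_toNNReal C) (norm_nonneg (x - y))]

theorem norm_le_of_mem_csub {K : NNReal} (hφ : LipschitzWith K φ) {y ζ : E}
    (hζ : ζ ∈ csub φ y) : ‖ζ‖ ≤ K := by
  have h := hζ (y + ζ)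
  rw [add_sub_cancel_left, real_inner_self_eq_norm_sq] at h
  have hlip : φ (y + ζ) - φ y ≤ K * ‖ζ‖ := by
    simpa [dist_eq_norm] using (hφ.dist_le_mul (y + ζ) y).trans' (le_abs_self _)
  rcases (norm_nonneg ζ).eq_or_lt with h0 | h0
  · rw [← h0]; exact K.coe_nonneg
  · nlinarith

theorem ConvexOn.comp_sub_const (hφ : ConvexOn ℝ univ φ) (c : E) :
    ConvexOn ℝ univ fun u => φ (u - c) := by
  simpa [Function.comp_def, neg_add_eq_sub] using hφ.translate_right (-c)

theorem csub_comp_sub_const (φ : E → ℝ) (c z : E) :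
    csub (fun u => φ (u - c)) z = csub φ (z - c) := by
  ext ζ
  refine ⟨fun h w => ?_, fun h w => ?_⟩
  · simpa [sub_sub_eq_add_sub] using h (w + c)
  · simpa [sub_sub_sub_cancel_right] using h (w - c)

theorem mem_csub_of_tendsto {ι : Type*} {l : Filter ι} [l.NeBot] (hφ : Continuous φ)
    {y ζ : E} {ys ζs : ι → E} (hy : Tendsto ys l (𝓝 y)) (hζ : Tendsto ζs l (𝓝 ζ))
    (hmem : ∀ k, ζs k ∈ csub φ (ys k)) : ζ ∈ csub φ y := fun w =>
  le_of_tendsto' (((hφ.tendsto y).comp hy).add (hζ.inner (tendsto_const_nhds.sub hy)))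
    fun k => hmem k w

theorem neg_mem_csub_of_forall_le_add (hφ : ConvexOn ℝ univ φ) {g : E → ℝ} {y G : E} {M : ℝ}
    (hmin : ∀ u, φ y + g y ≤ φ u + g u)
    (hg : ∀ u, g u ≤ g y + ⟪G, u - y⟫ + M * ‖u - y‖ ^ 2) : -G ∈ csub φ y := by
  intro w
  set a := φ w - φ y + ⟪G, w - y⟫
  have hstep : ∀ t ∈ Ioo (0 : ℝ) 1, 0 ≤ a + t * (M * ‖w - y‖ ^ 2) := by
    rintro t ⟨ht0, ht1⟩
    have hconv := hφ.2 (mem_univ y) (mem_univ w) (by linarith : 0 ≤ 1 - t) ht0.le (by ring)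
    have hpt : (1 - t) • y + t • w - y = t • (w - y) := by
      rw [smul_sub, sub_smul, one_smul]; abel
    have h := hg ((1 - t) • y + t • w)
    have h' := hmin ((1 - t) • y + t • w)
    rw [hpt, inner_smul_right, norm_smul, Real.norm_of_nonneg ht0.le] at h
    simp only [smul_eq_mul] at hconv
    have : 0 ≤ t * (a + t * (M * ‖w - y‖ ^ 2)) := by nlinarith
    exact nonneg_of_mul_nonneg_right this ht0
  have hlim : Tendsto (fun t : ℝ => a + t * (M * ‖w - y‖ ^ 2)) (𝓝[>] 0) (𝓝 a) :=
    ((by fun_prop : Continuous fun t : ℝ => a + t * (M * ‖w - y‖ ^ 2)).tendsto' 0 a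
      (by simp)).mono_left nhdsWithin_le_nhds
  have ha : 0 ≤ a := ge_of_tendsto hlim (mem_of_superset (Ioo_mem_nhdsGT one_pos) hstep)
  rw [inner_neg_left]
  linarith

end ConvexSubdifferential

section ProxLimit

variable {E : Type*} [NormedAddCommGroup E] [InnerProductSpace ℝ E] [FiniteDimensional ℝ E]
  {J : E → ℝ} {η : ℝ}

theorem exists_isProxSubgradient_prox (hJ0 : ∀ v, 0 ≤ J v) (hJ : LowerSemicontinuous J)
    (hη : 0 < η) (q : E) : ∃ p, IsProxSubgradient J p ((2 * η) • (q - p)) := by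
  have hlsc : LowerSemicontinuous fun v => J v + η * ‖v - q‖ ^ 2 :=
    hJ.add (by fun_prop : Continuous fun v => η * ‖v - q‖ ^ 2).lowerSemicontinuous
  obtain ⟨p, hp⟩ := hlsc.exists_forall_le_of_isBounded q
    (isBounded_of_forall_mul_sq_norm_sub_le hη q fun v hv => by
      simp only [mem_ofPred_eq, sub_self, norm_zero] at hv
      nlinarith [hJ0 v])
  refine ⟨p, ?_⟩
  have hG : -((2 * η) • (p - q)) = (2 * η) • (q - p) := by rw [← smul_neg, neg_sub]
  rw [← hG]
  refine IsProxSubgradient.of_forall_le_add (g := fun v => η * ‖v - q‖ ^ 2) (M := η) hp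
    fun u => ?_
  rw [norm_sub_sq_eq_add_inner p q u, real_inner_smul_left]
  linarith

/- (J2) survives the limit as `(ν - 2η) ‖z - v‖² ≤ ⟪ξ - ξ', z - v⟫` for every proximal
subgradient `ξ'` of `J` at any `v`; tested at the proximal point of `J` at `z + ξ / (2η)`, this
forces that point to be `z`, which makes `ξ` a proximal subgradient at `z`. -/
theorem mem_fsub_of_tendsto_isProxSubgradient {ν : ℝ} (hJ0 : ∀ v, 0 ≤ J v)
    (hJ : LowerSemicontinuous J) (hη : 0 < η) (hν : 0 < ν)
    (hJ2 : ∀ v₁ v₂ ξ₁ ξ₂ : E, ξ₁ ∈ fsub (fun v => J v + η * ‖v‖ ^ 2) v₁ →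
      ξ₂ ∈ fsub (fun v => J v + η * ‖v‖ ^ 2) v₂ →
      ν * ‖v₁ - v₂‖ ^ 2 ≤ ⟪ξ₁ - ξ₂, v₁ - v₂⟫)
    {ι : Type*} {l : Filter ι} [l.NeBot] {x ξs : ι → E} {z ξ : E}
    (hx : Tendsto x l (𝓝 z)) (hξ : Tendsto ξs l (𝓝 ξ))
    (hprox : ∀ k, IsProxSubgradient J (x k) (ξs k)) : ξ ∈ fsub J z := by
  have hmono : ∀ v ξ', IsProxSubgradient J v ξ' →
      (ν - 2 * η) * ‖z - v‖ ^ 2 ≤ ⟪ξ - ξ', z - v⟫ := by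
    intro v ξ' h'
    refine le_of_tendsto_of_tendsto' (((hx.sub_const v).norm.pow 2).const_mul _)
      ((hξ.sub_const ξ').inner (hx.sub_const v)) fun k => ?_
    have h := hJ2 _ _ _ _ ((hprox k).add_sq_norm η).mem_fsub (h'.add_sq_norm η).mem_fsub
    have hsplit : ξs k + (2 * η) • x k - (ξ' + (2 * η) • v)
        = (ξs k - ξ') + (2 * η) • (x k - v) := by module
    rw [hsplit, inner_add_left, real_inner_smul_left, real_inner_self_eq_norm_sq] at h
    linarith
  have h2η : (2 * η) ≠ 0 := by positivity
  obtain ⟨p, hp⟩ := exists_isProxSubgradient_prox hJ0 hJ hη (z + (2 * η)⁻¹ • ξ)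
  obtain rfl : z = p := by
    have hvec : ξ - (2 * η) • (z + (2 * η)⁻¹ • ξ - p) = (-(2 * η)) • (z - p) := by
      rw [smul_sub, smul_add, smul_inv_smul₀ h2η]; module
    have h := hmono p _ hp
    rw [hvec, real_inner_smul_left, real_inner_self_eq_norm_sq] at h
    exact eq_of_mul_sq_norm_sub_nonpos hν (by linarith)
  rw [add_sub_cancel_left, smul_inv_smul₀ h2η] at hp
  exact hp.mem_fsub

end ProxLimit

section Penalty

variable {E F : Type*} [NormedAddCommGroup E] [InnerProductSpace ℝ E]
  [NormedAddCommGroup F] [InnerProductSpace ℝ F]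
  (A : E →ₗ[ℝ] F) (J φ : E → ℝ) (z : E) (κ : ℝ)

/- For `p = (x, y)`, `x` carries `J` and `y` carries `φ`; the coupling `x = y` and the constraint
`A x = A z` are penalized with weight `a`, and the `κ`-term keeps the minimizers near `z`. -/
def penalty (a : ℝ) (p : E × E) : ℝ :=
  J p.1 + φ p.2 + a * (‖p.1 - p.2‖ ^ 2 + ‖A (p.1 - z)‖ ^ 2)
    + κ * (‖p.1 - z‖ ^ 2 + ‖p.2 - z‖ ^ 2)

variable {A J φ z κ}

theorem penalty_self (a : ℝ) : penalty A J φ z κ a (z, z) = J z + φ z := by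
  simp [penalty]

theorem le_of_penalty_le (hJ0 : ∀ v, 0 ≤ J v) (hφ0 : ∀ v, 0 ≤ φ v) (hκ : 0 ≤ κ) {a V : ℝ}
    (ha : 0 ≤ a) {p : E × E} (h : penalty A J φ z κ a p ≤ V) :
    J p.1 + φ p.2 + κ * (‖p.1 - z‖ ^ 2 + ‖p.2 - z‖ ^ 2) ≤ V ∧
      a * ‖p.1 - p.2‖ ^ 2 ≤ V ∧ a * ‖A (p.1 - z)‖ ^ 2 ≤ V := by
  unfold penalty at h
  have := hJ0 p.1
  have := hφ0 p.2
  have : 0 ≤ a * ‖p.1 - p.2‖ ^ 2 := by positivity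
  have : 0 ≤ a * ‖A (p.1 - z)‖ ^ 2 := by positivity
  have : 0 ≤ κ * (‖p.1 - z‖ ^ 2 + ‖p.2 - z‖ ^ 2) := by positivity
  refine ⟨?_, ?_, ?_⟩ <;> nlinarith

theorem exists_forall_penalty_le [FiniteDimensional ℝ E] (hJ0 : ∀ v, 0 ≤ J v)
    (hφ0 : ∀ v, 0 ≤ φ v) (hJ : LowerSemicontinuous J) (hφ : Continuous φ) (hκ : 0 < κ)
    {a : ℝ} (ha : 0 ≤ a) : ∃ p, ∀ q, penalty A J φ z κ a p ≤ penalty A J φ z κ a q := by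
  have hA : Continuous A := A.continuous_of_finiteDimensional
  have hlsc : LowerSemicontinuous (penalty A J φ z κ a) :=
    (((hJ.comp continuous_fst).add (hφ.comp continuous_snd).lowerSemicontinuous).add
      (by fun_prop : Continuous fun p : E × E =>
        a * (‖p.1 - p.2‖ ^ 2 + ‖A (p.1 - z)‖ ^ 2)).lowerSemicontinuous).add
      (by fun_prop : Continuous fun p : E × E =>
        κ * (‖p.1 - z‖ ^ 2 + ‖p.2 - z‖ ^ 2)).lowerSemicontinuous
  refine hlsc.exists_forall_le_of_isBounded (z, z)
    (isBounded_of_forall_mul_sq_norm_sub_le (M := J z + φ z) hκ (z, z) fun p hp => ?_)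
  rw [mem_ofPred_eq, penalty_self] at hp
  have h := (le_of_penalty_le hJ0 hφ0 hκ.le ha hp).1
  have hnorm : ‖p - (z, z)‖ ^ 2 ≤ ‖p.1 - z‖ ^ 2 + ‖p.2 - z‖ ^ 2 := by
    rw [Prod.norm_def]
    rcases max_choice ‖p.1 - z‖ ‖p.2 - z‖ with h' | h' <;>
      simp only [Prod.fst_sub, Prod.snd_sub, h'] <;> nlinarith
  nlinarith [hJ0 p.1, hφ0 p.2]

theorem eq_and_tendsto_snd_of_penalty_le [FiniteDimensional ℝ E] (hJ0 : ∀ v, 0 ≤ J v)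
    (hφ0 : ∀ v, 0 ≤ φ v) (hJ : LowerSemicontinuous J) (hφ : Continuous φ) (hκ : 0 < κ)
    (hz : ∀ u, A u = A z → J z + φ z ≤ J u + φ u + κ * ‖u - z‖ ^ 2)
    {ι : Type*} {l : Filter ι} [l.NeBot] {a : ι → ℝ} {p : ι → E × E} {x₀ : E}
    (ha0 : ∀ k, 0 ≤ a k) (ha : Tendsto a l atTop)
    (hp : ∀ k, penalty A J φ z κ (a k) (p k) ≤ J z + φ z)
    (hx : Tendsto (fun k => (p k).1) l (𝓝 x₀)) :
    x₀ = z ∧ Tendsto (fun k => (p k).2) l (𝓝 z) := by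
  have hbd := fun k => le_of_penalty_le hJ0 hφ0 hκ.le (ha0 k) (hp k)
  have hy : Tendsto (fun k => (p k).2) l (𝓝 x₀) := by
    simpa using hx.sub (tendsto_zero_of_mul_sq_norm_le ha fun k => (hbd k).2.1)
  have hAx₀ : A x₀ = A z := by
    have hA : Continuous A := A.continuous_of_finiteDimensional
    have := tendsto_nhds_unique ((hA.tendsto _).comp (hx.sub_const z))
      (tendsto_zero_of_mul_sq_norm_le ha fun k => (hbd k).2.2)
    rwa [map_sub, sub_eq_zero] at this
  have hlim : J x₀ + φ x₀ + κ * (‖x₀ - z‖ ^ 2 + ‖x₀ - z‖ ^ 2) ≤ J z + φ z := by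
    have hlsc : LowerSemicontinuous fun q : E × E =>
        J q.1 + φ q.2 + κ * (‖q.1 - z‖ ^ 2 + ‖q.2 - z‖ ^ 2) :=
      ((hJ.comp continuous_fst).add (hφ.comp continuous_snd).lowerSemicontinuous).add
        (by fun_prop : Continuous fun q : E × E =>
          κ * (‖q.1 - z‖ ^ 2 + ‖q.2 - z‖ ^ 2)).lowerSemicontinuous
    exact (hlsc.isClosed_preimage _).mem_of_tendsto (hx.prodMk_nhds hy)
      (.of_forall fun k => (hbd k).1)
  obtain rfl : x₀ = z := eq_of_mul_sq_norm_sub_nonpos hκ (by linarith [hz x₀ hAx₀])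
  exact ⟨rfl, hy⟩

end Penalty

section PenaltyOptimality

variable {E F : Type*} [NormedAddCommGroup E] [InnerProductSpace ℝ E] [FiniteDimensional ℝ E]
  [NormedAddCommGroup F] [InnerProductSpace ℝ F] [FiniteDimensional ℝ F]
  {A : E →ₗ[ℝ] F} {J φ : E → ℝ} {z : E} {κ : ℝ}

theorem exists_first_order_of_penalty_min (hφ : ConvexOn ℝ univ φ) {a : ℝ} (ha : 0 ≤ a)
    {p : E × E} (hmin : ∀ q, penalty A J φ z κ a p ≤ penalty A J φ z κ a q) :
    ∃ ξ ζ, IsProxSubgradient J p.1 ξ ∧ ζ ∈ csub φ p.2 ∧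
      ξ + ζ + (2 * κ) • ((p.1 - z) + (p.2 - z)) ∈ LinearMap.range (LinearMap.adjoint A) := by
  obtain ⟨x, y⟩ := p
  set B := ‖LinearMap.toContinuousLinearMap A‖
  have hAx : IsProxSubgradient J x
      (-((2 * a) • (x - y) + (2 * a) • LinearMap.adjoint A (A (x - z)) + (2 * κ) • (x - z))) := by
    refine IsProxSubgradient.of_forall_le_add (M := a + a * B ^ 2 + κ)
      (g := fun u => φ y + a * (‖u - y‖ ^ 2 + ‖A (u - z)‖ ^ 2) + κ * (‖u - z‖ ^ 2 + ‖y - z‖ ^ 2))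
      (fun u => by have := hmin (u, y); simp only [penalty] at this; linarith) fun u => ?_
    have hA : ‖A (u - z)‖ ^ 2 = ‖A (x - z)‖ ^ 2 + 2 * ⟪LinearMap.adjoint A (A (x - z)), u - x⟫
        + ‖A (u - x)‖ ^ 2 := by
      rw [LinearMap.adjoint_inner_left]
      simpa only [map_sub] using norm_sub_sq_eq_add_inner (A x) (A z) (A u)
    have hB : ‖A (u - x)‖ ^ 2 ≤ B ^ 2 * ‖u - x‖ ^ 2 := by
      rw [← mul_pow]
      exact pow_le_pow_left₀ (norm_nonneg _)
        ((LinearMap.toContinuousLinearMap A).le_opNorm (u - x)) 2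
    simp only [inner_add_left, real_inner_smul_left, norm_sub_sq_eq_add_inner x y u,
      norm_sub_sq_eq_add_inner x z u, hA]
    nlinarith [mul_le_mul_of_nonneg_left hB ha]
  have hAy : -((2 * a) • (y - x) + (2 * κ) • (y - z)) ∈ csub φ y := by
    refine neg_mem_csub_of_forall_le_add hφ (M := a + κ)
      (g := fun v => J x + a * (‖v - x‖ ^ 2 + ‖A (x - z)‖ ^ 2) + κ * (‖x - z‖ ^ 2 + ‖v - z‖ ^ 2))
      (fun v => by
        have := hmin (x, v); simp only [penalty, norm_sub_rev x] at this; linarith) fun v => ?_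
    simp only [inner_add_left, real_inner_smul_left, norm_sub_sq_eq_add_inner y x v,
      norm_sub_sq_eq_add_inner y z v]
    linarith
  refine ⟨_, _, hAx, hAy, (-(2 * a)) • A (x - z), ?_⟩
  rw [map_smul]
  module

theorem exists_seq_penalty_le_first_order {L : ℝ} {K : NNReal} (hJ0 : ∀ v, 0 ≤ J v)
    (hJ : LowerSemicontinuous J) (hL : 0 ≤ L) (hJ3 : ∀ v ξ, ξ ∈ fsub J v → ‖ξ‖ ≤ L * (J v + 1))
    (hφ0 : ∀ v, 0 ≤ φ v) (hφ : ConvexOn ℝ univ φ) (hφK : LipschitzWith K φ) (hκ : 0 < κ) :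
    ∃ (p : ℕ → E × E) (ξ ζ : ℕ → E), (∀ n : ℕ, penalty A J φ z κ (n + 1) (p n) ≤ J z + φ z) ∧
      (∀ n, IsProxSubgradient J (p n).1 (ξ n)) ∧ (∀ n, ζ n ∈ csub φ (p n).2) ∧
      (∀ n, ξ n + ζ n + (2 * κ) • (((p n).1 - z) + ((p n).2 - z))
        ∈ LinearMap.range (LinearMap.adjoint A)) ∧
      Bornology.IsBounded (range fun n => ((p n).1, ξ n, ζ n)) := by
  choose p hp using fun n : ℕ =>
    exists_forall_penalty_le (A := A) (z := z) hJ0 hφ0 hJ hφK.continuous hκ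
      (by positivity : (0 : ℝ) ≤ n + 1)
  have hpV : ∀ n : ℕ, penalty A J φ z κ (n + 1) (p n) ≤ J z + φ z := fun n =>
    (hp n (z, z)).trans_eq (penalty_self _)
  choose ξ ζ hξ hζ hrange using fun n : ℕ =>
    exists_first_order_of_penalty_min hφ (by positivity : (0 : ℝ) ≤ n + 1) (hp n)
  have hbd := fun n : ℕ => (le_of_penalty_le hJ0 hφ0 hκ.le (by positivity) (hpV n)).1
  have hJV : ∀ n, J (p n).1 ≤ J z + φ z := fun n => by
    nlinarith [hbd n, hφ0 (p n).2, sq_nonneg ‖(p n).1 - z‖, sq_nonneg ‖(p n).2 - z‖]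
  have hxV : ∀ n, κ * ‖(p n).1 - z‖ ^ 2 ≤ J z + φ z := fun n => by
    nlinarith [hbd n, hJ0 (p n).1, hφ0 (p n).2, sq_nonneg ‖(p n).2 - z‖]
  refine ⟨p, ξ, ζ, hpV, hξ, hζ, hrange, ?_⟩
  refine ((isBounded_of_forall_mul_sq_norm_sub_le (S := range fun n => (p n).1) hκ z
    (forall_mem_range.2 hxV)).prod
    ((Metric.isBounded_closedBall (x := 0) (r := L * (J z + φ z + 1))).prod
      (Metric.isBounded_closedBall (x := 0) (r := K)))).subset ?_
  rintro _ ⟨n, rfl⟩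
  refine ⟨mem_range_self n, ?_, ?_⟩ <;> rw [Metric.mem_closedBall, dist_zero_right]
  · exact (hJ3 _ _ (hξ n).mem_fsub).trans (by gcongr; exact hJV n)
  · exact norm_le_of_mem_csub hφK (hζ n)

theorem fsub_add_csub_inter_range_adjoint_nonempty {η ν L : ℝ} {K : NNReal}
    (hJ0 : ∀ v, 0 ≤ J v) (hJ : LowerSemicontinuous J) (hη : 0 < η) (hν : 0 < ν)
    (hJ2 : ∀ v₁ v₂ ξ₁ ξ₂ : E, ξ₁ ∈ fsub (fun v => J v + η * ‖v‖ ^ 2) v₁ →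
      ξ₂ ∈ fsub (fun v => J v + η * ‖v‖ ^ 2) v₂ →
      ν * ‖v₁ - v₂‖ ^ 2 ≤ ⟪ξ₁ - ξ₂, v₁ - v₂⟫)
    (hL : 0 ≤ L) (hJ3 : ∀ v ξ, ξ ∈ fsub J v → ‖ξ‖ ≤ L * (J v + 1))
    (hφ0 : ∀ v, 0 ≤ φ v) (hφ : ConvexOn ℝ univ φ) (hφK : LipschitzWith K φ) (hκ : 0 < κ)
    (hz : ∀ u, A u = A z → J z + φ z ≤ J u + φ u + κ * ‖u - z‖ ^ 2) :
    ((fsub J z + csub φ z) ∩ range (LinearMap.adjoint A)).Nonempty := by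
  obtain ⟨p, ξ, ζ, hpV, hξ, hζ, hrange, hbdd⟩ :=
    exists_seq_penalty_le_first_order (A := A) hJ0 hJ hL hJ3 hφ0 hφ hφK hκ
  obtain ⟨⟨x₀, ξ₀, ζ₀⟩, -, τ, hτ, hlim⟩ := tendsto_subseq_of_bounded hbdd (mem_range_self ·)
  have hx : Tendsto (fun k => (p (τ k)).1) atTop (𝓝 x₀) := (continuous_fst.tendsto _).comp hlim
  have hξτ : Tendsto (fun k => ξ (τ k)) atTop (𝓝 ξ₀) :=
    (continuous_fst.comp continuous_snd |>.tendsto _).comp hlim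
  have hζτ : Tendsto (fun k => ζ (τ k)) atTop (𝓝 ζ₀) :=
    (continuous_snd.comp continuous_snd |>.tendsto _).comp hlim
  obtain ⟨rfl, hy⟩ := eq_and_tendsto_snd_of_penalty_le hJ0 hφ0 hJ hφK.continuous hκ hz
    (a := fun k => (τ k : ℝ) + 1) (fun k => by positivity)
    (tendsto_atTop_add_const_right _ 1 (tendsto_natCast_atTop_atTop.comp hτ.tendsto_atTop))
    (fun k => hpV (τ k)) hx
  refine ⟨ξ₀ + ζ₀, add_mem_add
    (mem_fsub_of_tendsto_isProxSubgradient hJ0 hJ hη hν hJ2 hx hξτ fun k => hξ (τ k))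
    (mem_csub_of_tendsto hφK.continuous hy hζτ fun k => hζ (τ k)), ?_⟩
  rw [← LinearMap.coe_range]
  refine (Submodule.closed_of_finiteDimensional _).mem_of_tendsto (b := atTop)
    (f := fun k => ξ (τ k) + ζ (τ k) + (2 * κ) • (((p (τ k)).1 - x₀) + ((p (τ k)).2 - x₀))) ?_
    (.of_forall fun k => hrange (τ k))
  simpa using (hξτ.add hζτ).add (((hx.sub_const x₀).add (hy.sub_const x₀)).const_smul (2 * κ))

end PenaltyOptimality

section ProxIterate

variable {E : Type*} [NormedAddCommGroup E]

def IsProxIterate (G : E → ℝ) (S : Set E) (η : ℝ) (w : ℕ → E) : Prop :=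
  ∀ j, w (j + 1) ∈ S ∧
    ∀ u ∈ S, G (w (j + 1)) + η * ‖w (j + 1) - w j‖ ^ 2 ≤ G u + η * ‖u - w j‖ ^ 2

namespace IsProxIterate

variable {G : E → ℝ} {S : Set E} {η : ℝ} {w : ℕ → E}

theorem add_sq_norm_le (hw : IsProxIterate G S η w) {j : ℕ} (hj : 1 ≤ j) :
    G (w (j + 1)) + η * ‖w (j + 1) - w j‖ ^ 2 ≤ G (w j) := by
  obtain ⟨k, rfl⟩ := Nat.exists_eq_add_of_le' hj
  simpa using (hw (k + 1)).2 _ (hw k).1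

theorem antitone (hw : IsProxIterate G S η w) (hη : 0 ≤ η) :
    Antitone fun j => G (w (j + 1)) :=
  antitone_nat_of_succ_le fun j => by
    nlinarith [hw.add_sq_norm_le (Nat.le_add_left 1 j), sq_nonneg ‖w (j + 1 + 1) - w (j + 1)‖]

theorem exists_tendsto (hw : IsProxIterate G S η w) (hη : 0 ≤ η) (hG : BddBelow (range G)) :
    ∃ l, Tendsto (fun j => G (w j)) atTop (𝓝 l) :=
  ⟨_, (tendsto_add_atTop_iff_nat 1).1 (tendsto_atTop_ciInf (hw.antitone hη)
    (hG.mono (range_comp_subset_range _ G)))⟩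

theorem exists_norm_le (hw : IsProxIterate G S η w) (hη : 0 ≤ η)
    (hG : ∀ C, Bornology.IsBounded {v ∈ S | G v ≤ C}) : ∃ C, ∀ j, ‖w j‖ ≤ C := by
  obtain ⟨C, hC⟩ := isBounded_iff_forall_norm_le.1 (hG (G (w 1)))
  refine ⟨max C ‖w 0‖, fun j => ?_⟩
  rcases j with _ | j
  · exact le_max_right _ _
  · exact (hC _ ⟨(hw j).1, hw.antitone hη (Nat.zero_le j)⟩).trans (le_max_left _ _)

theorem tendsto_norm_sub (hw : IsProxIterate G S η w) (hη : 0 < η) (hG : BddBelow (range G)) :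
    Tendsto (fun j => ‖w (j + 1) - w j‖) atTop (𝓝 0) := by
  obtain ⟨l, hl⟩ := hw.exists_tendsto hη.le hG
  have hdecr : Tendsto (fun j => (G (w j) - G (w (j + 1))) / η) atTop (𝓝 0) := by
    simpa using (hl.sub (hl.comp (tendsto_add_atTop_nat 1))).div_const η
  have hsq : Tendsto (fun j => ‖w (j + 1) - w j‖ ^ 2) atTop (𝓝 0) := by
    refine squeeze_zero' (.of_forall fun j => sq_nonneg _) ?_ hdecr
    filter_upwards [eventually_ge_atTop 1] with j hj
    rw [le_div_iff₀ hη]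
    linarith [hw.add_sq_norm_le hj]
  simpa [Real.sqrt_sq (norm_nonneg _)] using hsq.sqrt

theorem mem_and_le_of_mapClusterPt (hw : IsProxIterate G S η w) (hη : 0 < η)
    (hG : BddBelow (range G)) (hGlsc : LowerSemicontinuous G) (hS : IsClosed S) {z : E}
    (hz : MapClusterPt z atTop w) : z ∈ S ∧ ∀ u ∈ S, G z ≤ G u + η * ‖u - z‖ ^ 2 := by
  obtain ⟨l, hl⟩ := hw.exists_tendsto hη.le hG
  obtain ⟨σ, hσ, hwσ⟩ := hz.tendsto_subseq
  have hσ' : Tendsto σ atTop atTop := hσ.tendsto_atTop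
  have hwσ1 : Tendsto (fun k => w (σ k + 1)) atTop (𝓝 z) := by
    simpa using hwσ.add (tendsto_zero_iff_norm_tendsto_zero.2
      ((hw.tendsto_norm_sub hη hG).comp hσ'))
  have hGσ1 : Tendsto (fun k => G (w (σ k + 1))) atTop (𝓝 l) :=
    hl.comp ((tendsto_add_atTop_nat 1).comp hσ')
  refine ⟨hS.mem_of_tendsto hwσ1 (.of_forall fun k => (hw (σ k)).1), fun u hu => ?_⟩
  refine (hGlsc.le_of_tendsto hwσ1 hGσ1).trans (le_of_tendsto_of_tendsto' hGσ1
    (tendsto_const_nhds.add (((tendsto_const_nhds.sub hwσ).norm.pow 2).const_mul η)) fun k => ?_)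
  simp only [Function.comp_apply]
  nlinarith [(hw (σ k)).2 u hu, sq_nonneg ‖w (σ k + 1) - w (σ k)‖]

end IsProxIterate

end ProxIterate

theorem inner_minimization_algorithm_properties_general
    {E F : Type*} [NormedAddCommGroup E] [InnerProductSpace ℝ E] [FiniteDimensional ℝ E]
    [NormedAddCommGroup F] [InnerProductSpace ℝ F] [FiniteDimensional ℝ F]
    (A : E →ₗ[ℝ] F)
    (J : E → ℝ) (hJnonneg : ∀ v, 0 ≤ J v)
    (hJ1 : ∀ C : ℝ, Bornology.IsBounded {v : E | J v + ‖A v‖ ^ 2 ≤ C})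
    (η : ℝ) (hη : 0 < η) (ν : ℝ) (hν : 0 < ν)
    (hJ2 : ∀ v₁ v₂ ξ₁ ξ₂ : E, ξ₁ ∈ fsub (fun v => J v + η * ‖v‖ ^ 2) v₁ →
      ξ₂ ∈ fsub (fun v => J v + η * ‖v‖ ^ 2) v₂ →
      ν * ‖v₁ - v₂‖ ^ 2 ≤ ⟪ξ₁ - ξ₂, v₁ - v₂⟫)
    (L : ℝ) (hL : 0 < L)
    (hJ3 : ∀ v ξ : E, ξ ∈ fsub J v → ‖ξ‖ ≤ L * (J v + 1))
    (α : ℝ) (hα : α = 0 ∨ α = 1)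
    (ψ : E → ℝ) (hψnonneg : ∀ v, 0 ≤ ψ v)
    (hΨ : α = 1 →
      (∀ v : E, ψ v = 0 ↔ v = 0) ∧
      (∀ v₁ v₂ : E, ψ (v₁ + v₂) ≤ ψ v₁ + ψ v₂) ∧
      (∀ c : ℝ, 0 ≤ c → ∀ v : E, ψ (c • v) = c * ψ v))
    (f : ℝ → F)
    (δ : ℝ)
    (i : ℕ)
    -- v^{i-2} and v^{i-1}; for i = 1 one takes v^{i-2} = v^{-1} := v₀
    (vm1 : E)
    -- the inner iterates: w 0 = v^{i-1}; w (j+1) is the (unique) minimizer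
    (w : ℕ → E) (hw0 : w 0 = vm1)
    (hwmin : ∀ j : ℕ, A (w (j + 1)) = f ((i : ℝ) * δ) ∧
      ∀ u : E, A u = f ((i : ℝ) * δ) →
        J (w (j + 1)) + η * ‖w (j + 1) - w j‖ ^ 2 + α * ψ (w (j + 1) - w 0)
          ≤ J u + η * ‖u - w j‖ ^ 2 + α * ψ (u - w 0)) :
    -- (i) monotonicity and convergence of the energies for j ≥ 2
    ((∀ j : ℕ, 2 ≤ j →
        J (w (j + 1)) + α * ψ (w (j + 1) - w 0) ≤ J (w j) + α * ψ (w j - w 0)) ∧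
      ∃ l : ℝ, Tendsto (fun j => J (w j) + α * ψ (w j - w 0)) atTop (𝓝 l)) ∧
    -- (ii) boundedness and asymptotically vanishing increments
    ((∃ C : ℝ, ∀ j : ℕ, ‖w j‖ ≤ C) ∧
      Tendsto (fun j => ‖w (j + 1) - w j‖) atTop (𝓝 0)) ∧
    -- (iii) every cluster point is a constrained critical point
    (∀ z : E, MapClusterPt z atTop w →
      A z = f ((i : ℝ) * δ) ∧
      ((fsub J z + csub (fun x => α * ψ x) (z - vm1)) ∩
        Set.range (LinearMap.adjoint A)).Nonempty) := by
  set b := f ((i : ℝ) * δ)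
  set G : E → ℝ := fun u => J u + α * ψ (u - w 0)
  have hαψ0 : ∀ x, 0 ≤ α * ψ x := by
    rcases hα with rfl | rfl <;> simp [hψnonneg]
  obtain ⟨hadd, hsmul⟩ : (∀ x y, α * ψ (x + y) ≤ α * ψ x + α * ψ y) ∧
      ∀ c : ℝ, 0 ≤ c → ∀ x, α * ψ (c • x) = c * (α * ψ x) := by
    rcases hα with rfl | rfl
    · simp
    · simpa using (hΨ rfl).2
  obtain ⟨K, hK⟩ := exists_lipschitzWith_of_sublinear (φ := fun x => α * ψ x) hadd hsmul
  have hJlsc : LowerSemicontinuous J := lowerSemicontinuous_of_forall_mem_fsub_norm_le _ hJ3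
  have hG0 : BddBelow (range G) :=
    ⟨0, forall_mem_range.2 fun u => add_nonneg (hJnonneg u) (hαψ0 _)⟩
  have hw : IsProxIterate G {u | A u = b} η w := fun j =>
    ⟨(hwmin j).1, fun u hu => by linarith [(hwmin j).2 u hu]⟩
  refine ⟨⟨fun j hj => ?_, hw.exists_tendsto hη.le hG0⟩,
    ⟨hw.exists_norm_le hη.le fun C => (hJ1 (C + ‖b‖ ^ 2)).subset ?_,
      hw.tendsto_norm_sub hη hG0⟩, fun z hz => ?_⟩
  · nlinarith [hw.add_sq_norm_le (by omega : 1 ≤ j), sq_nonneg ‖w (j + 1) - w j‖]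
  · rintro v ⟨hvS, hvG⟩
    rw [mem_ofPred_eq, show A v = b from hvS]
    linarith [hαψ0 (v - w 0)]
  · obtain ⟨hzS, hzmin⟩ := hw.mem_and_le_of_mapClusterPt hη hG0
      (hJlsc.add (hK.comp_sub_const (w 0)).continuous.lowerSemicontinuous)
      (isClosed_eq A.continuous_of_finiteDimensional continuous_const) hz
    have hconv := (convexOn_univ_of_sublinear (φ := fun x => α * ψ x) hadd hsmul).comp_sub_const
    rw [← hw0, ← csub_comp_sub_const]
    exact ⟨hzS, fsub_add_csub_inter_range_adjoint_nonempty hJnonneg hJlsc hη hν hJ2 hL.le hJ3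
      (fun u => hαψ0 _) (hconv (w 0)) (hK.comp_sub_const (w 0)) hη
      fun u hu => by linarith [hzmin u (hu.trans hzS)]⟩

/-- Properties of the inner minimization algorithm, Lemma 3.? of the paper. -/
theorem inner_minimization_algorithm_properties
    {E F : Type*} [NormedAddCommGroup E] [InnerProductSpace ℝ E] [FiniteDimensional ℝ E]
    [NormedAddCommGroup F] [InnerProductSpace ℝ F] [FiniteDimensional ℝ F]
    (A : E →ₗ[ℝ] F) (hA : Function.Surjective A)
    (γ : ℝ) (hγ : 0 < γ) (hAγ : ∀ q : F, γ * ‖q‖ ≤ ‖LinearMap.adjoint A q‖)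
    (J : E → ℝ) (hJnonneg : ∀ v, 0 ≤ J v)
    (hJ1 : ∀ C : ℝ, Bornology.IsBounded {v : E | J v + ‖A v‖ ^ 2 ≤ C})
    (η : ℝ) (hη : 0 < η) (ν : ℝ) (hν : 0 < ν)
    (hJ2 : ∀ v₁ v₂ ξ₁ ξ₂ : E, ξ₁ ∈ fsub (fun v => J v + η * ‖v‖ ^ 2) v₁ →
      ξ₂ ∈ fsub (fun v => J v + η * ‖v‖ ^ 2) v₂ →
      ν * ‖v₁ - v₂‖ ^ 2 ≤ ⟪ξ₁ - ξ₂, v₁ - v₂⟫)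
    (L : ℝ) (hL : 0 < L)
    (hJ3 : ∀ v ξ : E, ξ ∈ fsub J v → ‖ξ‖ ≤ L * (J v + 1))
    (α : ℝ) (hα : α = 0 ∨ α = 1)
    (ψ : E → ℝ) (hψnonneg : ∀ v, 0 ≤ ψ v)
    (hΨ : α = 1 →
      (∀ v : E, ψ v = 0 ↔ v = 0) ∧
      (∀ v₁ v₂ : E, ψ (v₁ + v₂) ≤ ψ v₁ + ψ v₂) ∧
      (∀ c : ℝ, 0 ≤ c → ∀ v : E, ψ (c • v) = c * ψ v))
    (T : ℝ) (hT : 0 < T)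
    (f f' : ℝ → F)
    (hf'L2 : MemLp f' 2 (volume.restrict (Set.Icc (0 : ℝ) T)))
    (hfFTC : ∀ t ∈ Set.Icc (0 : ℝ) T, f t = f 0 + ∫ s in (0 : ℝ)..t, f' s)
    (v₀ : E) (hv₀ : IsCritPt A (fun v => J v + α * ψ (v - v₀)) (f 0) v₀)
    (δ : ℝ) (hδ : δ ∈ Set.Ioo (0 : ℝ) 1)
    (i : ℕ) (hi : 1 ≤ i) (hiT : (i : ℝ) * δ ≤ T)
    -- v^{i-2} and v^{i-1}; for i = 1 one takes v^{i-2} = v^{-1} := v₀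
    (vm2 vm1 : E) (hvm2 : i = 1 → vm2 = v₀)
    (hvm1 : IsCritPt A (fun v => J v + α * ψ (v - vm2)) (f (((i : ℝ) - 1) * δ)) vm1)
    -- the inner iterates: w 0 = v^{i-1}; w (j+1) is the (unique) minimizer
    (w : ℕ → E) (hw0 : w 0 = vm1)
    (hwmin : ∀ j : ℕ, A (w (j + 1)) = f ((i : ℝ) * δ) ∧
      ∀ u : E, A u = f ((i : ℝ) * δ) →
        J (w (j + 1)) + η * ‖w (j + 1) - w j‖ ^ 2 + α * ψ (w (j + 1) - w 0)
          ≤ J u + η * ‖u - w j‖ ^ 2 + α * ψ (u - w 0)) :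
    -- (i) monotonicity and convergence of the energies for j ≥ 2
    ((∀ j : ℕ, 2 ≤ j →
        J (w (j + 1)) + α * ψ (w (j + 1) - w 0) ≤ J (w j) + α * ψ (w j - w 0)) ∧
      ∃ l : ℝ, Tendsto (fun j => J (w j) + α * ψ (w j - w 0)) atTop (𝓝 l)) ∧
    -- (ii) boundedness and asymptotically vanishing increments
    ((∃ C : ℝ, ∀ j : ℕ, ‖w j‖ ≤ C) ∧
      Tendsto (fun j => ‖w (j + 1) - w j‖) atTop (𝓝 0)) ∧
    -- (iii) every cluster point is a constrained critical point
    (∀ z : E, MapClusterPt z atTop w →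
      A z = f ((i : ℝ) * δ) ∧
      ((fsub J z + csub (fun x => α * ψ x) (z - vm1)) ∩
        Set.range (LinearMap.adjoint A)).Nonempty) :=
  inner_minimization_algorithm_properties_general A J hJnonneg hJ1 η hη ν hν hJ2 L hL hJ3 α hα ψ
    hψnonneg hΨ f δ i vm1 w hw0 hwmin

end
end

section
/- Uniform bound for the algorithm-generated evolutions. Let T > 0, α ∈ {0,1}, f ∈ W^{1,2}([0,T]; 𝓕), and let v₀ ∈ 𝓔 be a critical point of v ↦ J(v) + αψ(v − v₀) on 𝐀(f(0)). Assume (J1)–(J3) hold, and (Ψ1)–(Ψ3) if α = 1. Then there exists a constant Z₁ > 0 (depending only on J, A, γ, L, η, ψ, v₀ and f, but not on δ) such that for every δ ∈ (0,1), every function v_δ : [−δ,T] → 𝓔 constructed by the algorithm (choosing at each step i a cluster point v^i of the iterates v^i_j and setting v_δ = v^i on [iδ,(i+1)δ)) satisfies ‖v_δ(t)‖ ≤ Z₁ for every t ∈ [0,T]. -/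
/-!
Each outer step of the algorithm is compared with the competitor `v^{i-1} + w`, where `A w` is the
constraint increment `f(iδ) - f((i-1)δ)` and `‖w‖ ≤ ‖A w‖ / γ` (from `‖A* q‖ ≥ γ ‖q‖`). Condition
(J3) makes `log (J + 1)` an `L`-Lipschitz function, i.e. `J (v + w) + 1 ≤ (J v + 1) e^{L ‖w‖}`;
since the proximal iterates decrease, their cluster point `v^i` satisfies
`J v^i + 1 ≤ (J v^{i-1} + 1) e^{L ‖w‖} + C ‖w‖`. A discrete Gronwall argument then bounds
`J v^i` in terms of `∫ ‖f'‖`, and as `‖A v^i‖ = ‖f(iδ)‖` is bounded too, (J1) bounds `v^i`.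
-/
open MeasureTheory Filter Set
open scoped RealInnerProductSpace Topology Pointwise ENNReal

noncomputable section

section FrechetSubgradient

variable {E : Type*} [NormedAddCommGroup E] [InnerProductSpace ℝ E]

/-- `fsub` is stated through a real `liminf`, which takes the junk value `0` when the difference
quotient is unbounded below; this ε-form of the subgradient inequality avoids that. -/
def IsFrechetSubgradient (S : E → ℝ) (u ξ : E) : Prop :=
  ∀ ε > 0, ∀ᶠ v in 𝓝 u, S u + ⟪ξ, v - u⟫ - ε * ‖v - u‖ ≤ S v

theorem IsFrechetSubgradient.mem_fsub {S : E → ℝ} {u ξ : E} (h : IsFrechetSubgradient S u ξ) :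
    ξ ∈ fsub S u := by
  rw [fsub, mem_ofPred_eq, liminf_eq]
  set Q := {a : ℝ | ∀ᶠ v in 𝓝[≠] u, a ≤ (S v - S u - ⟪ξ, v - u⟫) / ‖v - u‖}
  have hQ : ∀ ε > 0, -ε ∈ Q := fun ε hε => by
    filter_upwards [nhdsWithin_le_nhds (h ε hε), self_mem_nhdsWithin] with v hv hne
    rw [le_div_iff₀ (norm_pos_iff.2 (sub_ne_zero.2 hne))]
    linarith
  by_cases hb : BddAbove Q
  · exact le_of_forall_pos_le_add fun ε hε => by linarith [le_csSup hb (hQ ε hε)]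
  · rw [Real.sSup_of_not_bddAbove hb]

/-- At a point where `S` is not lower semicontinuous the difference quotient is unbounded below,
so its real `liminf` takes the junk value `0`. -/
theorem mem_fsub_of_not_lowerSemicontinuousAt {S : E → ℝ} {u : E}
    (h : ¬ LowerSemicontinuousAt S u) (ξ : E) : ξ ∈ fsub S u := by
  obtain ⟨y, hyu, hy⟩ : ∃ y < S u, ∃ᶠ v in 𝓝 u, S v ≤ y := by
    by_contra hne
    push Not at hne
    exact h fun y hy => by simpa using hne y hy
  suffices hQ : {a : ℝ | ∀ᶠ v in 𝓝[≠] u, a ≤ (S v - S u - ⟪ξ, v - u⟫) / ‖v - u‖} = ∅ by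
    rw [fsub, mem_ofPred_eq, liminf_eq, hQ, Real.sSup_empty]
  refine eq_empty_of_forall_notMem fun a ha => ?_
  have hr : 0 < (S u - y) / (|a| + ‖ξ‖ + 1) := by
    apply div_pos <;> [linarith; positivity]
  obtain ⟨v, hvy, hva, hvr⟩ := (hy.and_eventually ((eventually_nhdsWithin_iff.1 ha).and
    (Metric.ball_mem_nhds u hr))).exists
  have hvu : v ≠ u := fun hvu => by rw [hvu] at hvy; linarith
  have hd : 0 < ‖v - u‖ := norm_pos_iff.2 (sub_ne_zero.2 hvu)
  have hva := (le_div_iff₀ hd).1 (hva hvu)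
  have hvr : ‖v - u‖ * (|a| + ‖ξ‖ + 1) < S u - y := by
    rw [dist_eq_norm] at hvr
    exact (lt_div_iff₀ (by positivity)).1 hvr
  nlinarith [neg_le_of_abs_le (abs_real_inner_le_norm ξ (v - u)),
    mul_le_mul_of_nonneg_right (neg_le_abs a) hd.le]

theorem lowerSemicontinuous_of_norm_fsub_le {S g : E → ℝ}
    (hS : ∀ v ξ, ξ ∈ fsub S v → ‖ξ‖ ≤ g v) : LowerSemicontinuous S := by
  intro u
  rcases subsingleton_or_nontrivial E with hE | hE
  · exact fun y hy => Eventually.of_forall fun v => by rwa [Subsingleton.elim v u]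
  · by_contra h
    obtain ⟨ξ, hξ⟩ := exists_norm_eq E (by positivity : 0 ≤ |g u| + 1)
    linarith [hS u ξ (mem_fsub_of_not_lowerSemicontinuousAt h ξ), le_abs_self (g u)]

theorem isFrechetSubgradient_neg_of_forall_add_le {h g : E → ℝ} {v ζ : E}
    (hmin : ∀ v', h v + g v ≤ h v' + g v') (hg : HasFDerivAt g (innerSL ℝ ζ) v) :
    IsFrechetSubgradient h v (-ζ) := by
  intro ε hε
  filter_upwards [hg.isLittleO.def hε] with v' hv'
  rw [innerSL_apply_apply, Real.norm_eq_abs] at hv'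
  rw [inner_neg_left]
  linarith [hmin v', le_abs_self (g v' - g v - ⟪ζ, v' - v⟫)]

theorem IsFrechetSubgradient.smul_of_log {S : E → ℝ} {u ξ : E} (hS : ∀ v, 0 < S v)
    (h : IsFrechetSubgradient (fun v => Real.log (S v)) u ξ) :
    IsFrechetSubgradient S u (S u • ξ) := by
  intro ε hε
  filter_upwards [h (ε / S u) (div_pos hε (hS u))] with v hv
  have hexp := Real.exp_le_exp.2 hv
  rw [Real.exp_log (hS v), add_sub_assoc, Real.exp_add, Real.exp_log (hS u)] at hexp
  have hlin := Real.add_one_le_exp (⟪ξ, v - u⟫ - ε / S u * ‖v - u‖)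
  have hSu := hS u
  rw [real_inner_smul_left]
  calc S u + S u * ⟪ξ, v - u⟫ - ε * ‖v - u‖
      = S u * (⟪ξ, v - u⟫ - ε / S u * ‖v - u‖ + 1) := by field_simp; ring
    _ ≤ S u * Real.exp (⟪ξ, v - u⟫ - ε / S u * ‖v - u‖) := by gcongr
    _ ≤ S v := hexp

theorem hasFDerivAt_norm_sub {v y : E} (hv : v ≠ y) :
    HasFDerivAt (fun x => ‖x - y‖) (innerSL ℝ (‖v - y‖⁻¹ • (v - y))) v := by
  have hsq := ((hasFDerivAt_id v).sub_const y).norm_sq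
  have hne : ‖v - y‖ ^ 2 ≠ 0 := pow_ne_zero 2 (norm_ne_zero_iff.2 (sub_ne_zero.2 hv))
  convert hsq.sqrt hne using 1
  · funext x
    simp [Real.sqrt_sq (norm_nonneg _)]
  · ext w
    simp only [map_smul, smul_apply, coe_innerSL_apply, smul_eq_mul, Real.sqrt_sq (norm_nonneg _),
      ContinuousLinearMap.comp_id, nsmul_eq_mul, Nat.cast_ofNat, id_eq]
    field_simp

variable [FiniteDimensional ℝ E]

theorem LowerSemicontinuous.exists_forall_le_of_isBounded_s7 {S : E → ℝ} (hS : LowerSemicontinuous S)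
    (x₀ : E) (hb : Bornology.IsBounded {x | S x ≤ S x₀}) : ∃ x, ∀ y, S x ≤ S y := by
  have hc : IsCompact {x | S x ≤ S x₀} :=
    Metric.isCompact_of_isClosed_isBounded (hS.isClosed_preimage (S x₀)) hb
  have hx₀ : x₀ ∈ {x | S x ≤ S x₀} := show S x₀ ≤ S x₀ from le_rfl
  obtain ⟨x, -, hmin⟩ := (hS.lowerSemicontinuousOn _).exists_isMinOn ⟨x₀, hx₀⟩ hc
  refine ⟨x, fun y => ?_⟩
  by_cases hy : S y ≤ S x₀
  · exact isMinOn_iff.1 hmin y hy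
  · exact (isMinOn_iff.1 hmin x₀ hx₀).trans (le_of_not_ge hy)

theorem le_add_mul_norm_of_isFrechetSubgradient {h : E → ℝ} {L : ℝ} (hlsc : LowerSemicontinuous h)
    (hbdd : BddBelow (range h)) (hL : 0 ≤ L)
    (hsub : ∀ v ξ, IsFrechetSubgradient h v ξ → ‖ξ‖ ≤ L) (x y : E) :
    h y ≤ h x + L * ‖x - y‖ := by
  suffices hK : ∀ K > L, h y ≤ h x + K * ‖x - y‖ by
    refine le_of_forall_pos_le_add fun ε hε => ?_
    have hKε := hK (L + ε / (‖x - y‖ + 1)) (lt_add_of_pos_right _ (by positivity))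
    have hε' : ε / (‖x - y‖ + 1) * ‖x - y‖ ≤ ε := by
      rw [div_mul_eq_mul_div, div_le_iff₀ (by positivity)]
      nlinarith [norm_nonneg (x - y)]
    linarith
  intro K hK
  obtain ⟨m, hm⟩ := hbdd
  set Φ := fun v => h v + K * ‖v - y‖ with hΦ_def
  have hΦ : LowerSemicontinuous Φ :=
    hlsc.add (continuous_const.mul (continuous_id.sub continuous_const).norm).lowerSemicontinuous
  have hb : Bornology.IsBounded {v | Φ v ≤ Φ x} := by
    refine (Metric.isBounded_closedBall (x := y) (r := (Φ x - m) / K)).subset fun v hv => ?_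
    rw [Metric.mem_closedBall, dist_eq_norm, le_div_iff₀ (by linarith)]
    have := hm ⟨v, rfl⟩
    simp only [hΦ_def, mem_ofPred_eq] at hv
    linarith
  obtain ⟨v, hv⟩ := hΦ.exists_forall_le_of_isBounded_s7 x hb
  -- away from `y` the penalty is smooth with gradient of norm `K > L`, so `v = y`
  obtain rfl : v = y := by
    by_contra hne
    have hg := (hasFDerivAt_norm_sub hne).const_mul K
    rw [← map_smul] at hg
    have hξ := hsub v _
      (isFrechetSubgradient_neg_of_forall_add_le (g := fun x => K * ‖x - y‖) hv hg)
    rw [norm_neg, norm_smul, norm_smul, norm_inv, norm_norm,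
      inv_mul_cancel₀ (norm_ne_zero_iff.2 (sub_ne_zero.2 hne)), Real.norm_of_nonneg (by linarith)]
      at hξ
    linarith
  simpa [hΦ_def] using hv x

theorem add_one_le_mul_exp_of_norm_fsub_le {J : E → ℝ} {L : ℝ} (hJ : ∀ v, 0 ≤ J v) (hL : 0 ≤ L)
    (hJ3 : ∀ v ξ, ξ ∈ fsub J v → ‖ξ‖ ≤ L * (J v + 1)) (x w : E) :
    J (x + w) + 1 ≤ (J x + 1) * Real.exp (L * ‖w‖) := by
  have hpos : ∀ v, 0 < J v + 1 := fun v => by linarith [hJ v]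
  have hlsc := lowerSemicontinuous_of_norm_fsub_le hJ3
  have hlog : LowerSemicontinuous fun v => Real.log (J v + 1) := fun u c hc => by
    filter_upwards [hlsc u (Real.exp c - 1)
      (by linarith [(Real.lt_log_iff_exp_lt (hpos u)).1 hc])] with v hv
    exact (Real.lt_log_iff_exp_lt (hpos v)).2 (by linarith)
  have hbdd : BddBelow (range fun v => Real.log (J v + 1)) :=
    ⟨0, by rintro _ ⟨v, rfl⟩; exact Real.log_nonneg (by linarith [hJ v])⟩
  have hsub : ∀ v ξ, IsFrechetSubgradient (fun v => Real.log (J v + 1)) v ξ → ‖ξ‖ ≤ L := by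
    intro v ξ hξ
    have hJξ : IsFrechetSubgradient J v ((J v + 1) • ξ) := fun ε hε =>
      (hξ.smul_of_log hpos ε hε).mono fun v' hv' => by linarith
    have := hJ3 v _ hJξ.mem_fsub
    rw [norm_smul, Real.norm_of_nonneg (hpos v).le, mul_comm L] at this
    exact le_of_mul_le_mul_left this (hpos v)
  have := le_add_mul_norm_of_isFrechetSubgradient hlog hbdd hL hsub x (x + w)
  rw [sub_add_cancel_left, norm_neg] at this
  calc J (x + w) + 1 = Real.exp (Real.log (J (x + w) + 1)) := (Real.exp_log (hpos _)).symm
    _ ≤ Real.exp (Real.log (J x + 1) + L * ‖w‖) := Real.exp_le_exp.2 this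
    _ = (J x + 1) * Real.exp (L * ‖w‖) := by rw [Real.exp_add, Real.exp_log (hpos x)]

end FrechetSubgradient

section LinearAlgebra

variable {E F : Type*} [NormedAddCommGroup E] [InnerProductSpace ℝ E] [FiniteDimensional ℝ E]
  [NormedAddCommGroup F] [InnerProductSpace ℝ F] [FiniteDimensional ℝ F]

/-- The preimage is `A† p` with `A A† p = q`; the bound comes from
`‖A† p‖² = ⟪p, q⟫ ≤ ‖p‖ ‖q‖ ≤ ‖A† p‖ ‖q‖ / γ`. -/
theorem exists_apply_eq_norm_le_div_of_le_norm_adjoint (A : E →ₗ[ℝ] F) {γ : ℝ} (hγ : 0 < γ)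
    (hAγ : ∀ q : F, γ * ‖q‖ ≤ ‖LinearMap.adjoint A q‖) (q : F) :
    ∃ w, A w = q ∧ ‖w‖ ≤ ‖q‖ / γ := by
  set A' := LinearMap.adjoint A
  have hsq : ∀ p, ‖A' p‖ ^ 2 = ⟪A (A' p), p⟫ := fun p => by
    rw [← real_inner_self_eq_norm_sq, LinearMap.adjoint_inner_right]
  have hinj : Function.Injective (A ∘ₗ A') := by
    rw [← LinearMap.ker_eq_bot, LinearMap.ker_eq_bot']
    intro p hp
    have h0 : ‖A' p‖ = 0 := by
      have := hsq p
      rw [← LinearMap.comp_apply, hp, inner_zero_left] at this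
      exact pow_eq_zero_iff two_ne_zero |>.1 this
    have := hAγ p
    rw [h0] at this
    exact norm_eq_zero.1 (le_antisymm (nonpos_of_mul_nonpos_right this hγ) (norm_nonneg p))
  obtain ⟨p, hp⟩ := LinearMap.injective_iff_surjective.1 hinj q
  refine ⟨A' p, hp, (le_div_iff₀ hγ).2 ?_⟩
  have hle : ‖A' p‖ ^ 2 ≤ ‖q‖ * ‖p‖ := by
    rw [hsq, ← LinearMap.comp_apply, hp]
    exact real_inner_le_norm q p
  by_contra hlt
  push Not at hlt
  have hpos : 0 < ‖A' p‖ := pos_of_mul_pos_left (hlt.trans_le' (norm_nonneg q)) hγ.le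
  nlinarith [mul_lt_mul_of_pos_left hlt hpos, mul_le_mul_of_nonneg_left (hAγ p) (norm_nonneg q),
    mul_le_mul_of_nonneg_left hle hγ.le]

end LinearAlgebra

section Sublinear

variable {E : Type*} [NormedAddCommGroup E] [InnerProductSpace ℝ E] [FiniteDimensional ℝ E]

theorem exists_le_mul_norm_of_subadditive {ψ : E → ℝ}
    (hadd : ∀ v₁ v₂, ψ (v₁ + v₂) ≤ ψ v₁ + ψ v₂)
    (hsmul : ∀ c : ℝ, 0 ≤ c → ∀ v, ψ (c • v) = c * ψ v) :
    ∃ C, 0 ≤ C ∧ ∀ v, ψ v ≤ C * ‖v‖ := by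
  set b := stdOrthonormalBasis ℝ E
  have hterm : ∀ (c : ℝ) (u : E), ψ (c • u) ≤ |c| * (|ψ u| + |ψ (-u)|) := by
    intro c u
    rcases le_or_gt 0 c with hc | hc
    · rw [hsmul c hc, abs_of_nonneg hc]
      nlinarith [le_abs_self (ψ u), abs_nonneg (ψ (-u))]
    · rw [show c • u = (-c) • -u by rw [smul_neg, neg_smul, neg_neg], hsmul (-c) (by linarith),
        abs_of_neg hc]
      nlinarith [le_abs_self (ψ (-u)), abs_nonneg (ψ u)]
  have hψ0 : ψ 0 ≤ 0 := by simpa using (hsmul 0 le_rfl 0).le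
  refine ⟨∑ i, (|ψ (b i)| + |ψ (-b i)|), by positivity, fun v => ?_⟩
  calc ψ v = ψ (∑ i, ⟪b i, v⟫ • b i) := by rw [b.sum_repr']
    _ ≤ ∑ i, ψ (⟪b i, v⟫ • b i) := Finset.le_sum_of_subadditive ψ hψ0 hadd _ _
    _ ≤ ∑ i, ‖v‖ * (|ψ (b i)| + |ψ (-b i)|) := by
      refine Finset.sum_le_sum fun i _ => (hterm _ _).trans ?_
      have := abs_real_inner_le_norm (b i) v
      rw [b.norm_eq_one, one_mul] at this
      gcongr
    _ = (∑ i, (|ψ (b i)| + |ψ (-b i)|)) * ‖v‖ := by rw [Finset.sum_mul]; simp_rw [mul_comm]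

end Sublinear

theorem discrete_gronwall_mul_exp {a d : ℕ → ℝ} {L C : ℝ} (hL : 0 ≤ L) (hC : 0 ≤ C)
    (hd : ∀ k, 0 ≤ d k) {n : ℕ} (hstep : ∀ k < n, a (k + 1) ≤ a k * Real.exp (L * d k) + C * d k) :
    a n ≤ (a 0 + C * ∑ k ∈ Finset.range n, d k) * Real.exp (L * ∑ k ∈ Finset.range n, d k) := by
  induction n with
  | zero => simp
  | succ n ih =>
    have ih := ih fun k hk => hstep k (by omega)
    have hS : 0 ≤ ∑ k ∈ Finset.range n, d k + d n :=
      add_nonneg (Finset.sum_nonneg fun k _ => hd k) (hd n)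
    rw [Finset.sum_range_succ]
    calc a (n + 1) ≤ a n * Real.exp (L * d n) + C * d n := hstep n (by omega)
      _ ≤ (a 0 + C * ∑ k ∈ Finset.range n, d k) * Real.exp (L * ∑ k ∈ Finset.range n, d k)
            * Real.exp (L * d n) + C * d n * Real.exp (L * (∑ k ∈ Finset.range n, d k + d n)) :=
        add_le_add (mul_le_mul_of_nonneg_right ih (Real.exp_pos _).le)
          (le_mul_of_one_le_right (mul_nonneg hC (hd n)) (Real.one_le_exp (by positivity)))
      _ = _ := by rw [mul_add L, Real.exp_add]; ring

section Variation

variable {F : Type*} [NormedAddCommGroup F] {f f' : ℝ → F} {T : ℝ}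

theorem norm_sub_le_integral_norm [NormedSpace ℝ F] (hf' : IntegrableOn f' (Icc 0 T))
    (hf : ∀ t ∈ Icc (0 : ℝ) T, f t = f 0 + ∫ s in (0 : ℝ)..t, f' s) {a b : ℝ} (ha : 0 ≤ a)
    (hab : a ≤ b) (hb : b ≤ T) : ‖f b - f a‖ ≤ ∫ s in a..b, ‖f' s‖ := by
  have hint : ∀ c, 0 ≤ c → c ≤ T → IntervalIntegrable f' volume 0 c := fun c hc hcT =>
    (hf'.mono_set (by rw [uIcc_of_le hc]; exact Icc_subset_Icc le_rfl hcT)).intervalIntegrable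
  rw [hf b ⟨ha.trans hab, hb⟩, hf a ⟨ha, hab.trans hb⟩, add_sub_add_left_eq_sub,
    intervalIntegral.integral_interval_sub_left (hint b (ha.trans hab) hb)
      (hint a ha (hab.trans hb))]
  exact intervalIntegral.norm_integral_le_integral_norm hab

theorem sum_norm_sub_le_integral_norm [NormedSpace ℝ F] (hf' : IntegrableOn f' (Icc 0 T))
    (hf : ∀ t ∈ Icc (0 : ℝ) T, f t = f 0 + ∫ s in (0 : ℝ)..t, f' s) {τ : ℕ → ℝ}
    (hτ : Monotone τ) (h0 : 0 ≤ τ 0) {n : ℕ} (hn : τ n ≤ T) :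
    ∑ k ∈ Finset.range n, ‖f (τ (k + 1)) - f (τ k)‖ ≤ ∫ s in (0 : ℝ)..T, ‖f' s‖ := by
  have hint : ∀ a b, 0 ≤ a → a ≤ b → b ≤ T →
      IntervalIntegrable (fun s => ‖f' s‖) volume a b := fun a b ha hab hb =>
    ((show IntegrableOn (fun s => ‖f' s‖) (Icc 0 T) volume from hf'.norm).mono_set
      (by rw [uIcc_of_le hab]; exact Icc_subset_Icc ha hb)).intervalIntegrable
  have hτ0 : ∀ k, 0 ≤ τ k := fun k => h0.trans (hτ (Nat.zero_le k))
  have hτn : ∀ k ≤ n, τ k ≤ T := fun k hk => (hτ hk).trans hn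
  calc ∑ k ∈ Finset.range n, ‖f (τ (k + 1)) - f (τ k)‖
      ≤ ∑ k ∈ Finset.range n, ∫ s in τ k..τ (k + 1), ‖f' s‖ :=
        Finset.sum_le_sum fun k hk => norm_sub_le_integral_norm hf' hf (hτ0 k) (hτ k.le_succ)
          (hτn _ (Finset.mem_range.1 hk))
    _ = ∫ s in τ 0..τ n, ‖f' s‖ := intervalIntegral.sum_integral_adjacent_intervals
        fun k hk => hint _ _ (hτ0 k) (hτ k.le_succ) (hτn _ hk)
    _ ≤ ∫ s in (0 : ℝ)..T, ‖f' s‖ :=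
        intervalIntegral.integral_mono_interval h0 (hτ (Nat.zero_le n)) hn
          (Eventually.of_forall fun s => norm_nonneg _) (hint 0 T le_rfl (hτ0 n |>.trans hn) le_rfl)

theorem norm_le_add_of_sum_norm_sub_le {δ V : ℝ}
    (hvar : ∀ n : ℕ, (n : ℝ) * δ ≤ T →
      ∑ k ∈ Finset.range n, ‖f (↑(k + 1) * δ) - f (k * δ)‖ ≤ V)
    {n : ℕ} (hn : (n : ℝ) * δ ≤ T) : ‖f (n * δ)‖ ≤ ‖f 0‖ + V := by
  have htel := Finset.sum_range_sub (fun k : ℕ => f (k * δ)) n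
  rw [Nat.cast_zero, zero_mul] at htel
  calc ‖f (n * δ)‖ = ‖f 0 + ∑ k ∈ Finset.range n, (f (↑(k + 1) * δ) - f (k * δ))‖ := by
        rw [htel, add_sub_cancel]
    _ ≤ ‖f 0‖ + ∑ k ∈ Finset.range n, ‖f (↑(k + 1) * δ) - f (k * δ)‖ :=
        (norm_add_le _ _).trans (add_le_add_right (norm_sum_le _ _) _)
    _ ≤ ‖f 0‖ + V := by linarith [hvar n hn]

end Variation

section ProximalIterates

variable {E : Type*} [NormedAddCommGroup E]

theorem mem_of_mapClusterPt_of_forall_succ_mem {X : Type*} [TopologicalSpace X] {S : Set X}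
    {x : ℕ → X} {c : X} (hS : IsClosed S) (hc : MapClusterPt c atTop x)
    (hx : ∀ j, x (j + 1) ∈ S) : c ∈ S :=
  hS.closure_subset <| ClusterPt.mem_closure_of_mem hc _ <| mem_map.2 <|
    show ∀ᶠ j in atTop, x j ∈ S from (eventually_ge_atTop 1).mono
      fun j hj => by obtain ⟨k, rfl⟩ := Nat.exists_eq_add_of_le' hj; exact hx k

theorem proximal_iterates_le {J φ : E → ℝ} {η : ℝ} {C : Set E} {x : ℕ → E} (hη : 0 ≤ η)
    (hx : ∀ j, x (j + 1) ∈ C ∧ ∀ u ∈ C,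
      J (x (j + 1)) + η * ‖x (j + 1) - x j‖ ^ 2 + φ (x (j + 1)) ≤ J u + η * ‖u - x j‖ ^ 2 + φ u)
    {u : E} (hu : u ∈ C) (j : ℕ) :
    J (x (j + 1)) + φ (x (j + 1)) ≤ J u + η * ‖u - x 0‖ ^ 2 + φ u := by
  induction j with
  | zero => nlinarith [(hx 0).2 u hu, mul_nonneg hη (sq_nonneg ‖x 1 - x 0‖)]
  | succ j ih =>
    have hdesc := (hx (j + 1)).2 (x (j + 1)) (hx j).1
    rw [sub_self, norm_zero] at hdesc
    nlinarith [mul_nonneg hη (sq_nonneg ‖x (j + 2) - x (j + 1)‖)]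

theorem cluster_le_of_proximal_iterates {J φ : E → ℝ} {η : ℝ} {C : Set E} {x : ℕ → E} {c : E}
    (hJ : LowerSemicontinuous J) (hφ : ∀ v, 0 ≤ φ v) (hη : 0 ≤ η)
    (hx : ∀ j, x (j + 1) ∈ C ∧ ∀ u ∈ C,
      J (x (j + 1)) + η * ‖x (j + 1) - x j‖ ^ 2 + φ (x (j + 1)) ≤ J u + η * ‖u - x j‖ ^ 2 + φ u)
    (hc : MapClusterPt c atTop x) {u : E} (hu : u ∈ C) :
    J c ≤ J u + η * ‖u - x 0‖ ^ 2 + φ u :=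
  show c ∈ J ⁻¹' Iic _ from mem_of_mapClusterPt_of_forall_succ_mem (hJ.isClosed_preimage _) hc
    fun j => show J (x (j + 1)) ≤ _ by linarith [proximal_iterates_le hη hx hu j, hφ (x (j + 1))]

end ProximalIterates

theorem AlgEvol.exists_eq {E : Type*} [NormedAddCommGroup E] {T δ : ℝ} {v₀ : E} {vi : ℕ → E}
    {vδ : ℝ → E} (h : AlgEvol T δ v₀ vi vδ) (hδ : 0 < δ) {t : ℝ} (ht : t ∈ Icc 0 T) :
    ∃ n : ℕ, (n : ℝ) * δ ≤ T ∧ vδ t = vi n := by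
  have hnt : (⌊t / δ⌋₊ : ℝ) * δ ≤ t := (le_div_iff₀ hδ).1 (Nat.floor_le (div_nonneg ht.1 hδ.le))
  have htn : t < (⌊t / δ⌋₊ : ℝ) * δ + δ := by
    simpa [add_one_mul] using (div_lt_iff₀ hδ).1 (Nat.lt_floor_add_one (t / δ))
  exact ⟨_, hnt.trans ht.2, h.2 _ (hnt.trans ht.2) t ⟨⟨by linarith [ht.1], ht.2⟩, hnt, htn⟩⟩

section Algorithm

variable {E F : Type*} [NormedAddCommGroup E] [InnerProductSpace ℝ E] [FiniteDimensional ℝ E]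
  [NormedAddCommGroup F] [InnerProductSpace ℝ F] [FiniteDimensional ℝ F]
  {J ψ : E → ℝ} {α η T δ : ℝ} {A : E →ₗ[ℝ] F} {f : ℝ → F} {v₀ : E} {vi : ℕ → E}
  {vseq : ℕ → ℕ → E}

theorem AlgData.apply_eq (hdata : AlgData J ψ α A η T δ f v₀ vi vseq) (hv₀ : A v₀ = f 0)
    {i : ℕ} (hi : (i : ℝ) * δ ≤ T) : A (vi i) = f (i * δ) := by
  cases i with
  | zero => simpa [hdata.1] using hv₀
  | succ i =>
    obtain ⟨-, hmin, hclu⟩ := hdata.2 (i + 1) (by omega) hi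
    exact mem_of_mapClusterPt_of_forall_succ_mem (S := {v | A v = f (↑(i + 1) * δ)})
      (isClosed_eq A.continuous_of_finiteDimensional continuous_const) hclu fun j => (hmin j).1

theorem AlgData.J_add_one_le (hdata : AlgData J ψ α A η T δ f v₀ vi vseq) (hv₀ : A v₀ = f 0)
    (hδ : 0 ≤ δ) {L γ Cψ V : ℝ} (hJ0 : ∀ v, 0 ≤ J v) (hJ : LowerSemicontinuous J)
    (hshift : ∀ x w, J (x + w) + 1 ≤ (J x + 1) * Real.exp (L * ‖w‖)) (hL : 0 ≤ L) (hη : 0 ≤ η)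
    (hψ : ∀ v, 0 ≤ α * ψ v ∧ α * ψ v ≤ Cψ * ‖v‖) (hCψ : 0 ≤ Cψ) (hγ : 0 < γ)
    (hpre : ∀ q, ∃ w, A w = q ∧ ‖w‖ ≤ ‖q‖ / γ)
    (hvar : ∀ n : ℕ, (n : ℝ) * δ ≤ T →
      ∑ k ∈ Finset.range n, ‖f (↑(k + 1) * δ) - f (k * δ)‖ ≤ V)
    {n : ℕ} (hn : (n : ℝ) * δ ≤ T) :
    J (vi n) + 1 ≤ (J v₀ + 1 + (η * (V / γ) + Cψ) * (V / γ)) * Real.exp (L * (V / γ)) := by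
  set d : ℕ → ℝ := fun k => ‖f (↑(k + 1) * δ) - f (k * δ)‖ / γ with hd_def
  have hd : ∀ k, 0 ≤ d k := fun k => by positivity
  have hsum : ∀ m : ℕ, (m : ℝ) * δ ≤ T → ∑ k ∈ Finset.range m, d k ≤ V / γ := fun m hm => by
    rw [hd_def, ← Finset.sum_div]
    exact div_le_div_of_nonneg_right (hvar m hm) hγ.le
  have hle : ∀ {k : ℕ}, k ≤ n → (k : ℝ) * δ ≤ T := fun hk =>
    (mul_le_mul_of_nonneg_right (Nat.cast_le.2 hk) hδ).trans hn
  have hV : 0 ≤ V / γ := (Finset.sum_nonneg fun k _ => hd k).trans (hsum n hn)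
  have hC : 0 ≤ η * (V / γ) + Cψ := add_nonneg (mul_nonneg hη hV) hCψ
  have hstep : ∀ k < n, J (vi (k + 1)) + 1 ≤
      (J (vi k) + 1) * Real.exp (L * d k) + (η * (V / γ) + Cψ) * d k := by
    intro k hk
    obtain ⟨hseq0, hmin, hclu⟩ := hdata.2 (k + 1) (by omega) (hle hk)
    rw [Nat.add_sub_cancel] at hseq0
    obtain ⟨w, hw, hwd⟩ := hpre (f (↑(k + 1) * δ) - f (k * δ))
    have hu : A (vi k + w) = f (↑(k + 1) * δ) := by
      rw [map_add, hdata.apply_eq hv₀ (hle hk.le), hw, add_sub_cancel]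
    have hwV : ‖w‖ ≤ V / γ := hwd.trans <| (Finset.single_le_sum (fun j _ => hd j)
      (Finset.self_mem_range_succ k)).trans (hsum (k + 1) (hle hk))
    have hcl := cluster_le_of_proximal_iterates (C := {v | A v = f (↑(k + 1) * δ)})
      (φ := fun v => α * ψ (v - vseq (k + 1) 0)) hJ (fun v => (hψ _).1) hη hmin hclu hu
    simp only [hseq0, add_sub_cancel_left] at hcl
    calc J (vi (k + 1)) + 1 ≤ J (vi k + w) + 1 + η * ‖w‖ ^ 2 + α * ψ w := by linarith
      _ ≤ (J (vi k) + 1) * Real.exp (L * ‖w‖) + (η * (V / γ) + Cψ) * ‖w‖ := by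
        nlinarith [hshift (vi k) w, (hψ w).2,
          mul_le_mul_of_nonneg_left hwV (mul_nonneg hη (norm_nonneg w))]
      _ ≤ (J (vi k) + 1) * Real.exp (L * d k) + (η * (V / γ) + Cψ) * d k := by
        have := hJ0 (vi k)
        gcongr
  calc J (vi n) + 1
      ≤ (J (vi 0) + 1 + (η * (V / γ) + Cψ) * ∑ k ∈ Finset.range n, d k)
          * Real.exp (L * ∑ k ∈ Finset.range n, d k) :=
        discrete_gronwall_mul_exp (a := fun k => J (vi k) + 1) hL hC hd hstep
    _ ≤ (J v₀ + 1 + (η * (V / γ) + Cψ) * (V / γ)) * Real.exp (L * (V / γ)) := by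
        rw [hdata.1]
        have := hJ0 v₀
        gcongr <;> exact hsum n hn

end Algorithm

theorem uniform_bound_for_algorithm_evolutions_general
    {E F : Type*} [NormedAddCommGroup E] [InnerProductSpace ℝ E] [FiniteDimensional ℝ E]
    [NormedAddCommGroup F] [InnerProductSpace ℝ F] [FiniteDimensional ℝ F]
    (A : E →ₗ[ℝ] F)
    (γ : ℝ) (hγ : 0 < γ) (hAγ : ∀ q : F, γ * ‖q‖ ≤ ‖LinearMap.adjoint A q‖)
    (J : E → ℝ) (hJnonneg : ∀ v, 0 ≤ J v)
    (hJ1 : ∀ C : ℝ, Bornology.IsBounded {v : E | J v + ‖A v‖ ^ 2 ≤ C})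
    (η : ℝ) (hη : 0 < η)
    (L : ℝ) (hL : 0 < L)
    (hJ3 : ∀ v ξ : E, ξ ∈ fsub J v → ‖ξ‖ ≤ L * (J v + 1))
    (α : ℝ) (hα : α = 0 ∨ α = 1)
    (ψ : E → ℝ) (hψnonneg : ∀ v, 0 ≤ ψ v)
    (hΨ : α = 1 →
      (∀ v : E, ψ v = 0 ↔ v = 0) ∧
      (∀ v₁ v₂ : E, ψ (v₁ + v₂) ≤ ψ v₁ + ψ v₂) ∧
      (∀ c : ℝ, 0 ≤ c → ∀ v : E, ψ (c • v) = c * ψ v))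
    (T : ℝ)
    (f f' : ℝ → F)
    (hf'L2 : MemLp f' 2 (volume.restrict (Set.Icc (0 : ℝ) T)))
    (hfFTC : ∀ t ∈ Set.Icc (0 : ℝ) T, f t = f 0 + ∫ s in (0 : ℝ)..t, f' s)
    (v₀ : E) (hv₀ : IsCritPt A (fun v => J v + α * ψ (v - v₀)) (f 0) v₀) :
    ∃ Z₁ : ℝ, 0 < Z₁ ∧
      ∀ δ ∈ Set.Ioo (0 : ℝ) 1, ∀ (vi : ℕ → E) (vseq : ℕ → ℕ → E) (vδ : ℝ → E),
        AlgData J ψ α A η T δ f v₀ vi vseq →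
        AlgEvol T δ v₀ vi vδ →
        ∀ t ∈ Set.Icc (0 : ℝ) T, ‖vδ t‖ ≤ Z₁ := by
  obtain ⟨Cψ, hCψ, hψ⟩ : ∃ C, 0 ≤ C ∧ ∀ v, 0 ≤ α * ψ v ∧ α * ψ v ≤ C * ‖v‖ := by
    rcases hα with rfl | rfl
    · exact ⟨0, le_rfl, fun v => by simp⟩
    · obtain ⟨C, hC, hψC⟩ := exists_le_mul_norm_of_subadditive (hΨ rfl).2.1 (hΨ rfl).2.2
      exact ⟨C, hC, fun v => by simpa using ⟨hψnonneg v, hψC v⟩⟩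
  have hf' : IntegrableOn f' (Icc 0 T) := hf'L2.integrable one_le_two
  set V := ∫ s in (0 : ℝ)..T, ‖f' s‖
  obtain ⟨R, hR⟩ := (hJ1 ((J v₀ + 1 + (η * (V / γ) + Cψ) * (V / γ)) * Real.exp (L * (V / γ))
    + (‖f 0‖ + V) ^ 2)).subset_closedBall 0
  refine ⟨|R| + 1, by positivity, ?_⟩
  rintro δ ⟨hδ, -⟩ vi vseq vδ hdata hevol t ht
  obtain ⟨n, hn, hvt⟩ := hevol.exists_eq hδ ht
  have hvar : ∀ m : ℕ, (m : ℝ) * δ ≤ T →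
      ∑ k ∈ Finset.range m, ‖f (↑(k + 1) * δ) - f (k * δ)‖ ≤ V := fun m hm =>
    sum_norm_sub_le_integral_norm hf' hfFTC (τ := fun k : ℕ => (k : ℝ) * δ)
      (fun i j hij => mul_le_mul_of_nonneg_right (Nat.cast_le.2 hij) hδ.le) (by simp) hm
  have hJn := hdata.J_add_one_le hv₀.1 hδ.le hJnonneg (lowerSemicontinuous_of_norm_fsub_le hJ3)
    (add_one_le_mul_exp_of_norm_fsub_le hJnonneg hL.le hJ3) hL.le hη.le hψ hCψ hγ
    (exists_apply_eq_norm_le_div_of_le_norm_adjoint A hγ hAγ) hvar hn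
  have hAn : ‖A (vi n)‖ ≤ ‖f 0‖ + V := by
    rw [hdata.apply_eq hv₀.1 hn]
    exact norm_le_add_of_sum_norm_sub_le hvar hn
  have hmem := hR (show J (vi n) + ‖A (vi n)‖ ^ 2 ≤ _ from
    add_le_add (by linarith) (pow_le_pow_left₀ (norm_nonneg _) hAn 2))
  rw [hvt]
  linarith [mem_closedBall_zero_iff.1 hmem, le_abs_self R]

/-- Uniform bound for the algorithm-generated evolutions. -/
theorem uniform_bound_for_algorithm_evolutions
    {E F : Type*} [NormedAddCommGroup E] [InnerProductSpace ℝ E] [FiniteDimensional ℝ E]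
    [NormedAddCommGroup F] [InnerProductSpace ℝ F] [FiniteDimensional ℝ F]
    (A : E →ₗ[ℝ] F) (hA : Function.Surjective A)
    (γ : ℝ) (hγ : 0 < γ) (hAγ : ∀ q : F, γ * ‖q‖ ≤ ‖LinearMap.adjoint A q‖)
    (J : E → ℝ) (hJnonneg : ∀ v, 0 ≤ J v)
    (hJ1 : ∀ C : ℝ, Bornology.IsBounded {v : E | J v + ‖A v‖ ^ 2 ≤ C})
    (η : ℝ) (hη : 0 < η) (ν : ℝ) (hν : 0 < ν)
    (hJ2 : ∀ v₁ v₂ ξ₁ ξ₂ : E, ξ₁ ∈ fsub (fun v => J v + η * ‖v‖ ^ 2) v₁ →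
      ξ₂ ∈ fsub (fun v => J v + η * ‖v‖ ^ 2) v₂ →
      ν * ‖v₁ - v₂‖ ^ 2 ≤ ⟪ξ₁ - ξ₂, v₁ - v₂⟫)
    (L : ℝ) (hL : 0 < L)
    (hJ3 : ∀ v ξ : E, ξ ∈ fsub J v → ‖ξ‖ ≤ L * (J v + 1))
    (α : ℝ) (hα : α = 0 ∨ α = 1)
    (ψ : E → ℝ) (hψnonneg : ∀ v, 0 ≤ ψ v)
    (hΨ : α = 1 →
      (∀ v : E, ψ v = 0 ↔ v = 0) ∧
      (∀ v₁ v₂ : E, ψ (v₁ + v₂) ≤ ψ v₁ + ψ v₂) ∧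
      (∀ c : ℝ, 0 ≤ c → ∀ v : E, ψ (c • v) = c * ψ v))
    (T : ℝ) (hT : 0 < T)
    (f f' : ℝ → F)
    (hf'L2 : MemLp f' 2 (volume.restrict (Set.Icc (0 : ℝ) T)))
    (hfFTC : ∀ t ∈ Set.Icc (0 : ℝ) T, f t = f 0 + ∫ s in (0 : ℝ)..t, f' s)
    (v₀ : E) (hv₀ : IsCritPt A (fun v => J v + α * ψ (v - v₀)) (f 0) v₀) :
    ∃ Z₁ : ℝ, 0 < Z₁ ∧
      ∀ δ ∈ Set.Ioo (0 : ℝ) 1, ∀ (vi : ℕ → E) (vseq : ℕ → ℕ → E) (vδ : ℝ → E),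
        AlgData J ψ α A η T δ f v₀ vi vseq →
        AlgEvol T δ v₀ vi vδ →
        ∀ t ∈ Set.Icc (0 : ℝ) T, ‖vδ t‖ ≤ Z₁ :=
  uniform_bound_for_algorithm_evolutions_general A γ hγ hAγ J hJnonneg hJ1 η hη L hL hJ3 α hα ψ
    hψnonneg hΨ T f f' hf'L2 hfFTC v₀ hv₀

end
end

section
/- A Helly-type selection lemma. Let X be a Banach space, T > 0, and let (δ_k)_{k∈ℕ} ⊂ (0,1) be a sequence with δ_k → 0⁺. For each k let v_k : [−δ_k, T] → X be a function of bounded variation, and assume the variations are equibounded: sup_k Var(v_k; [−δ_k, T]) < ∞. Then there exist an at most countable set N ⊂ [0,T] and a subsequence (k_j), independent of t, such that lim_{j→∞} ‖v_{k_j}(t − δ_{k_j}) − v_{k_j}(t)‖ = 0 for every t ∈ (0,T] \ N. -/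
/-!
The variation functions `V_k(t) = Var(v_k; [-δ_k, t])` are nondecreasing, uniformly bounded, and
dominate the increments: `‖v_k(t - δ_k) - v_k(t)‖ ≤ V_k(t) - V_k(t - δ_k)`. By compactness a
subsequence of `V_k` converges at every rational point; the limit is nondecreasing on `ℚ`, so
outside the countable set of its jumps it has arbitrarily small increments across `t`, and these
control `V_k(t) - V_k(t - δ_k)` along the subsequence.
-/

open MeasureTheory Filter Set
open scoped RealInnerProductSpace Topology Pointwise ENNReal

noncomputable section

section Variation

variable {X : Type*} [NormedAddCommGroup X] {ψ : X → ℝ} {u : ℝ → X} {a b c s T C : ℝ}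

lemma isPartSum_single (hab : a < b) : IsPartSum ψ u a b (ψ (u b - u a)) := by
  refine ⟨1, fun i => if i = 0 then a else b, by simp, by simp, ?_, by simp⟩
  intro i hi
  obtain rfl : i = 0 := Nat.lt_one_iff.mp hi
  simpa using hab

lemma IsPartSum.snoc (h : IsPartSum ψ u a b s) (hbc : b < c) :
    IsPartSum ψ u a c (s + ψ (u c - u b)) := by
  obtain ⟨k, t, h0, hk, hmono, rfl⟩ := h
  refine ⟨k + 1, fun i => if i ≤ k then t i else c, by simp [h0], by simp, ?_, ?_⟩
  · intro i hi
    rcases (Nat.lt_succ_iff.mp hi).lt_or_eq with hik | rfl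
    · simpa [hik.le, Nat.succ_le_of_lt hik] using hmono i hik
    · simpa [hk] using hbc
  · rw [Finset.sum_range_succ]
    congr 1
    · refine Finset.sum_congr rfl fun i hi => ?_
      have hik := Finset.mem_range.mp hi
      simp only [if_pos hik.le, if_pos (Nat.succ_le_of_lt hik)]
    · simp [hk]

lemma IsPartSum.le_of_le (hψ : ∀ x, 0 ≤ ψ x) (hC : ∀ s, IsPartSum ψ u a T s → s ≤ C)
    (hb : b ≤ T) (hs : IsPartSum ψ u a b s) : s ≤ C := by
  rcases hb.lt_or_eq with hbT | rfl
  · linarith [hC _ (hs.snoc hbT), hψ (u T - u b)]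
  · exact hC s hs

lemma bddAbove_setOf_isPartSum (hψ : ∀ x, 0 ≤ ψ x)
    (hC : ∀ s, IsPartSum ψ u a T s → s ≤ C) (hb : b ≤ T) : BddAbove {s | IsPartSum ψ u a b s} :=
  ⟨C, fun _ hs => hs.le_of_le hψ hC hb⟩

lemma psiVar_mem_Icc (hψ : ∀ x, 0 ≤ ψ x) (hC : ∀ s, IsPartSum ψ u a T s → s ≤ C)
    (hab : a < b) (hb : b ≤ T) : psiVar ψ u a b ∈ Icc 0 C :=
  ⟨(hψ _).trans (le_csSup (bddAbove_setOf_isPartSum hψ hC hb) (isPartSum_single hab)),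
    csSup_le ⟨_, isPartSum_single hab⟩ fun _ hs => hs.le_of_le hψ hC hb⟩

lemma psiVar_add_le (hψ : ∀ x, 0 ≤ ψ x) (hC : ∀ s, IsPartSum ψ u a T s → s ≤ C)
    (hab : a < b) (hbc : b < c) (hc : c ≤ T) :
    psiVar ψ u a b + ψ (u c - u b) ≤ psiVar ψ u a c := by
  rw [← le_sub_iff_add_le]
  refine csSup_le ⟨_, isPartSum_single hab⟩ fun s hs => ?_
  rw [le_sub_iff_add_le]
  exact le_csSup (bddAbove_setOf_isPartSum hψ hC hc) (hs.snoc hbc)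

lemma psiVar_monotoneOn (hψ : ∀ x, 0 ≤ ψ x) (hC : ∀ s, IsPartSum ψ u a T s → s ≤ C) :
    MonotoneOn (psiVar ψ u a) (Ioc a T) := by
  intro b hb c hc hbc
  rcases hbc.lt_or_eq with hbc | rfl
  · linarith [psiVar_add_le hψ hC hb.1 hbc hc.2, hψ (u c - u b)]
  · exact le_rfl

end Variation

lemma exists_subseq_tendsto_of_mem_Icc {ι : Type*} [Countable ι] {a b : ℝ}
    {f : ℕ → ι → ℝ} (hf : ∀ k i, f k i ∈ Icc a b) :
    ∃ φ : ℕ → ℕ, StrictMono φ ∧ ∃ L : ι → ℝ,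
      ∀ i, Tendsto (fun j => f (φ j) i) atTop (𝓝 (L i)) := by
  obtain ⟨L, -, φ, hφ, hL⟩ := isCompact_univ.tendsto_subseq
    (x := fun k i => (⟨f k i, hf k i⟩ : Icc a b)) fun _ => mem_univ _
  exact ⟨φ, hφ, fun i => L i, fun i =>
    (continuous_subtype_val.tendsto _).comp (tendsto_pi_nhds.mp hL i)⟩

lemma Monotone.countable_setOf_rat_gap {L : ℚ → ℝ} (hL : Monotone L) :
    {t : ℝ | ∃ ε > 0, ∀ q₁ q₂ : ℚ, (q₁ : ℝ) < t → t < q₂ → ε ≤ L q₂ - L q₁}.Countable := by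
  -- a gap of `L` at `t` is a jump of its left-continuous extension `M` to `ℝ`
  set M : ℝ → ℝ := fun t => sSup (L '' {q | (q : ℝ) < t})
  have hne (t : ℝ) : (L '' {q | (q : ℝ) < t}).Nonempty :=
    let ⟨q, hq⟩ := exists_rat_lt t; ⟨_, q, hq, rfl⟩
  have hle_of_le {q : ℚ} {t : ℝ} (htq : t ≤ q) : M t ≤ L q :=
    csSup_le (hne t) <| by
      rintro _ ⟨q', hq', rfl⟩
      exact hL (by exact_mod_cast (hq'.trans_le htq).le)
  have hbdd (t : ℝ) : BddAbove (L '' {q | (q : ℝ) < t}) := by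
    obtain ⟨q, hq⟩ := exists_rat_gt t
    refine ⟨L q, ?_⟩
    rintro _ ⟨q', hq', rfl⟩
    exact hL (by exact_mod_cast (hq'.trans hq).le)
  have hge_of_lt {q : ℚ} {t : ℝ} (hqt : (q : ℝ) < t) : L q ≤ M t :=
    le_csSup (hbdd t) ⟨q, hqt, rfl⟩
  have hM : Monotone M := fun s t hst =>
    csSup_le_csSup (hbdd t) (hne s) (image_mono fun q hq => lt_of_lt_of_le hq hst)
  refine hM.countable_not_continuousAt.mono ?_
  rintro t ⟨ε, hε, hgap⟩ hcont
  obtain ⟨d, hd, hMd⟩ := Metric.continuousAt_iff.mp hcont (ε / 4) (by positivity)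
  obtain ⟨q₁, hq₁, hq₁t⟩ := exists_rat_btwn (show t - d < t by linarith)
  obtain ⟨q₂, htq₂, hq₂⟩ := exists_rat_btwn (show t < t + d / 2 by linarith)
  have h₁ : M t - ε / 4 < L q₁ := by
    have := (abs_lt.mp (hMd (x := q₁) (by rw [Real.dist_eq, abs_lt]; constructor <;> linarith))).1
    linarith [hle_of_le (q := q₁) le_rfl]
  have h₂ : L q₂ < M t + ε / 4 := by
    have := (abs_lt.mp
      (hMd (x := t + d / 2) (by rw [Real.dist_eq, abs_lt]; constructor <;> linarith))).2
    linarith [hge_of_lt hq₂]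
  linarith [hgap q₁ q₂ hq₁t htq₂]

theorem exists_subseq_tendsto_sub_of_monotone {a b : ℝ} {f : ℕ → ℝ → ℝ}
    (hmono : ∀ k, Monotone (f k)) (hf : ∀ k t, f k t ∈ Icc a b) :
    ∃ N : Set ℝ, N.Countable ∧ ∃ φ : ℕ → ℕ, StrictMono φ ∧
      ∀ t ∉ N, ∀ x y : ℕ → ℝ, Tendsto x atTop (𝓝 t) → Tendsto y atTop (𝓝 t) →
        Tendsto (fun j => f (φ j) (y j) - f (φ j) (x j)) atTop (𝓝 0) := by
  obtain ⟨φ, hφ, L, hL⟩ := exists_subseq_tendsto_of_mem_Icc (ι := ℚ) fun k q => hf k q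
  have hLmono : Monotone L := fun q₁ q₂ hq =>
    le_of_tendsto_of_tendsto' (hL q₁) (hL q₂) fun j => hmono _ (by exact_mod_cast hq)
  refine ⟨_, hLmono.countable_setOf_rat_gap, φ, hφ, fun t ht x y hx hy => ?_⟩
  refine Metric.tendsto_nhds.mpr fun ε hε => ?_
  obtain ⟨q₁, q₂, hq₁, hq₂, hgap⟩ : ∃ q₁ q₂ : ℚ, (q₁ : ℝ) < t ∧ t < q₂ ∧ L q₂ - L q₁ < ε := by
    by_contra! h
    exact ht ⟨ε, hε, h⟩
  filter_upwards [hx.eventually (Ioo_mem_nhds hq₁ hq₂), hy.eventually (Ioo_mem_nhds hq₁ hq₂),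
    ((hL q₂).sub (hL q₁)).eventually_lt_const hgap] with j hxj hyj hj
  have := hmono (φ j)
  rw [Real.dist_eq, sub_zero, abs_lt]
  constructor <;> linarith [this hxj.1.le, this hxj.2.le, this hyj.1.le, this hyj.2.le]

theorem helly_type_selection_general
    {X : Type*} [NormedAddCommGroup X]
    (T : ℝ) (hT : 0 < T)
    (δ : ℕ → ℝ) (hδ : ∀ k, δ k ∈ Set.Ioo (0 : ℝ) 1)
    (hδ0 : Tendsto δ atTop (𝓝 0))
    (v : ℕ → ℝ → X)
    -- each v k has bounded variation on [-δ k, T], with equibounded variations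
    (hBV : ∃ C : ℝ, ∀ k : ℕ, ∀ s : ℝ,
      IsPartSum (fun x : X => ‖x‖) (v k) (-(δ k)) T s → s ≤ C) :
    ∃ N : Set ℝ, N.Countable ∧ N ⊆ Set.Icc 0 T ∧
      ∃ φ : ℕ → ℕ, StrictMono φ ∧
        ∀ t ∈ Set.Ioc (0 : ℝ) T \ N,
          Tendsto (fun j => ‖v (φ j) (t - δ (φ j)) - v (φ j) t‖) atTop (𝓝 0) := by
  obtain ⟨C, hC⟩ := hBV
  -- composing with `projIcc` makes the variation functions monotone on all of `ℝ`
  set V : ℕ → ℝ → ℝ := fun k t => psiVar (‖·‖) (v k) (-(δ k)) (projIcc 0 T hT.le t)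
  have hproj (k : ℕ) (t : ℝ) : (projIcc 0 T hT.le t : ℝ) ∈ Ioc (-(δ k)) T :=
    ⟨(neg_neg_of_pos (hδ k).1).trans_le (projIcc 0 T hT.le t).2.1, (projIcc 0 T hT.le t).2.2⟩
  have hVmono (k : ℕ) : Monotone (V k) := fun s t hst =>
    psiVar_monotoneOn norm_nonneg (hC k) (hproj k s) (hproj k t) (monotone_projIcc hT.le hst)
  have hVmem (k : ℕ) (t : ℝ) : V k t ∈ Icc 0 C :=
    psiVar_mem_Icc norm_nonneg (hC k) (hproj k t).1 (hproj k t).2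
  obtain ⟨N, hN, φ, hφ, hV⟩ := exists_subseq_tendsto_sub_of_monotone hVmono hVmem
  refine ⟨N ∩ Icc 0 T, hN.mono inter_subset_left, inter_subset_right, φ, hφ, ?_⟩
  rintro t ⟨⟨ht0, htT⟩, htN⟩
  have hδφ : Tendsto (fun j => δ (φ j)) atTop (𝓝 0) := hδ0.comp hφ.tendsto_atTop
  have hVlim := hV t (fun h => htN ⟨h, ht0.le, htT⟩) (fun j => t - δ (φ j)) (fun _ => t)
    (by simpa using tendsto_const_nhds.sub hδφ) tendsto_const_nhds
  refine squeeze_zero' (Eventually.of_forall fun _ => norm_nonneg _) ?_ hVlim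
  filter_upwards [hδφ.eventually_lt_const ht0] with j hj
  have hδj := (hδ (φ j)).1
  have hadd := psiVar_add_le norm_nonneg (hC (φ j)) (by linarith : -δ (φ j) < t - δ (φ j))
    (by linarith : t - δ (φ j) < t) htT
  simp only [V, projIcc_of_mem hT.le (⟨ht0.le, htT⟩ : t ∈ Icc 0 T),
    projIcc_of_mem hT.le (⟨by linarith, by linarith⟩ : t - δ (φ j) ∈ Icc 0 T)]
  rw [norm_sub_rev]
  linarith

/-- A Helly-type selection lemma. -/
theorem helly_type_selection
    {X : Type*} [NormedAddCommGroup X] [NormedSpace ℝ X] [CompleteSpace X]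
    (T : ℝ) (hT : 0 < T)
    (δ : ℕ → ℝ) (hδ : ∀ k, δ k ∈ Set.Ioo (0 : ℝ) 1)
    (hδ0 : Tendsto δ atTop (𝓝 0))
    (v : ℕ → ℝ → X)
    -- each v k has bounded variation on [-δ k, T], with equibounded variations
    (hBV : ∃ C : ℝ, ∀ k : ℕ, ∀ s : ℝ,
      IsPartSum (fun x : X => ‖x‖) (v k) (-(δ k)) T s → s ≤ C) :
    ∃ N : Set ℝ, N.Countable ∧ N ⊆ Set.Icc 0 T ∧
      ∃ φ : ℕ → ℕ, StrictMono φ ∧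
        ∀ t ∈ Set.Ioc (0 : ℝ) T \ N,
          Tendsto (fun j => ‖v (φ j) (t - δ (φ j)) - v (φ j) t‖) atTop (𝓝 0) :=
  helly_type_selection_general T hT δ hδ hδ0 v hBV

end
end

section
/- C^{1,1} energies satisfy the condition (J4). Let 𝓔 and 𝓕 be finite-dimensional real inner product spaces, let A : 𝓔 → 𝓕 be linear with adjoint A* satisfying ‖A* q‖ ≥ γ‖q‖ for all q ∈ 𝓕 for some γ > 0, let η ≥ 0, and let J : 𝓔 → ℝ be differentiable with gradient DJ that is Lipschitz continuous with constant M. If v̄, v₁, v₂ ∈ 𝓔 and q₁, q₂ ∈ 𝓕 satisfy A* qᵢ = DJ(vᵢ) + 2η(vᵢ − v̄) for i = 1, 2, then ⟨q₁ − q₂, A v₁ − A v₂⟩ ≤ ((M + 2η)/γ) ‖v₁ − v₂‖ ‖A v₁ − A v₂‖. -/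
open MeasureTheory Filter Set
open scoped RealInnerProductSpace Topology Pointwise ENNReal

noncomputable section

/-- C^{1,1} energies satisfy condition (J4). -/
theorem C11_energy_satisfies_J4
    {E F : Type*} [NormedAddCommGroup E] [InnerProductSpace ℝ E] [FiniteDimensional ℝ E]
    [NormedAddCommGroup F] [InnerProductSpace ℝ F] [FiniteDimensional ℝ F]
    (A : E →ₗ[ℝ] F)
    (γ : ℝ) (hγ : 0 < γ) (hAγ : ∀ q : F, γ * ‖q‖ ≤ ‖LinearMap.adjoint A q‖)
    (η : ℝ) (hη : 0 ≤ η)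
    (J : E → ℝ) (DJ : E → E) (hDJ : ∀ v, HasGradientAt J (DJ v) v)
    (M : ℝ) (hM : 0 ≤ M) (hLip : ∀ v w : E, ‖DJ v - DJ w‖ ≤ M * ‖v - w‖)
    (vb v₁ v₂ : E) (q₁ q₂ : F)
    (h₁ : LinearMap.adjoint A q₁ = DJ v₁ + (2 * η) • (v₁ - vb))
    (h₂ : LinearMap.adjoint A q₂ = DJ v₂ + (2 * η) • (v₂ - vb)) :
    ⟪q₁ - q₂, A v₁ - A v₂⟫ ≤ ((M + 2 * η) / γ) * ‖v₁ - v₂‖ * ‖A v₁ - A v₂‖ := by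
  have hq : LinearMap.adjoint A (q₁ - q₂) = DJ v₁ - DJ v₂ + (2 * η) • (v₁ - v₂) := by
    rw [map_sub, h₁, h₂]
    module
  have hnorm : ‖LinearMap.adjoint A (q₁ - q₂)‖ ≤ (M + 2 * η) * ‖v₁ - v₂‖ := by
    rw [hq]
    calc ‖DJ v₁ - DJ v₂ + (2 * η) • (v₁ - v₂)‖
        ≤ ‖DJ v₁ - DJ v₂‖ + ‖(2 * η) • (v₁ - v₂)‖ := norm_add_le _ _
      _ ≤ M * ‖v₁ - v₂‖ + (2 * η) * ‖v₁ - v₂‖ := by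
          gcongr
          · exact hLip v₁ v₂
          · rw [norm_smul, Real.norm_eq_abs, abs_of_nonneg (by linarith)]
      _ = (M + 2 * η) * ‖v₁ - v₂‖ := by ring
  have hqn : ‖q₁ - q₂‖ ≤ ((M + 2 * η) / γ) * ‖v₁ - v₂‖ := by
    rw [div_mul_eq_mul_div, le_div_iff₀ hγ]
    calc ‖q₁ - q₂‖ * γ = γ * ‖q₁ - q₂‖ := by ring
      _ ≤ ‖LinearMap.adjoint A (q₁ - q₂)‖ := hAγ _
      _ ≤ (M + 2 * η) * ‖v₁ - v₂‖ := hnorm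
  calc ⟪q₁ - q₂, A v₁ - A v₂⟫ ≤ ‖q₁ - q₂‖ * ‖A v₁ - A v₂‖ := real_inner_le_norm _ _
    _ ≤ ((M + 2 * η) / γ) * ‖v₁ - v₂‖ * ‖A v₁ - A v₂‖ := by
        gcongr

end
end
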